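/- arXiv:1606.02104 — 6 statements merged into one kernel-verified Lean document; each statement's English description precedes it below -/
import Mathlib

section
/- Let c₁, c₂, c₃, c₄ > 0. There is a constant K = K(c₁,c₂,c₃,c₄) such that: if 1 ≤ a < b ≤ 2a, f : [a,b] → ℝ is twice continuously differentiable, and λ₁ > 0 satisfies c₁λ₁ ≤ |f′(x)| ≤ c₂λ₁ and c₃λ₁ a^{−1} ≤ |f″(x)| ≤ c₄λ₁ a^{−1} for all x ∈ [a,b], then |Σ_{a < n ≤ b} e(f(n))| ≤ K (a^{1/2} λ₁^{1/2} + λ₁^{−1}), where n runs over integers. If in addition c₂λ₁ ≤ 1/2, then |Σ_{a < n ≤ b} e(f(n))| ≤ K λ₁^{−1}. -/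
/-- `e(x) = exp(2πix)`. -/
noncomputable def eexp (x : ℝ) : ℂ := Complex.exp (2 * Real.pi * Complex.I * x)

/-!
Kusmin–Landau: if the increments `φ n = g (n + 1) - g n` are monotone and lie in `[δ, 1 - δ]`,
then `e(g n) = (e(g (n + 1)) - e(g n)) w n` with `w n = -1/2 - (i/2) cot (π φ n)`, and Abel
summation bounds `∑ e(g n)` by `2 + 1/δ`, because the `cot (π φ n)` are monotone and `O(1/δ)`.

For the second-derivative estimate reduce to `f'' ≥ c₃λ/a > 0` by complex conjugation, so `f'` is
increasing with `|f'| ≤ c₂λ`. Cut the values of `f'` into about `c₂λ` unit windows around the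
integers `k`: where `f'` is `δ` away from `k`, Kusmin–Landau (after subtracting `k n`) gives
`O(1/δ)`; where `|f' - k| < δ` there are at most `2δa/(c₃λ) + 1` points. Taking `δ ≍ (λ/a)^(1/2)`
gives `O((aλ)^(1/2))`, and if `c₂λ ≤ 1/2` Kusmin–Landau applies to the whole sum with `δ = c₁λ`.
-/

open Real Finset Complex

lemma eexp_eq_cos_add_sin_mul_I (x : ℝ) :
    eexp x = Real.cos (2 * π * x) + Real.sin (2 * π * x) * I := by
  rw [eexp, ofReal_cos, ofReal_sin, ← Complex.exp_mul_I]
  push_cast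
  ring_nf

lemma eexp_add (x y : ℝ) : eexp (x + y) = eexp x * eexp y := by
  simp only [eexp, ← Complex.exp_add]
  push_cast
  ring_nf

lemma norm_eexp (x : ℝ) : ‖eexp x‖ = 1 := by
  rw [eexp, show 2 * (π : ℂ) * I * x = ((2 * π * x : ℝ) : ℂ) * I by push_cast; ring]
  exact norm_exp_ofReal_mul_I _

lemma eexp_intCast (m : ℤ) : eexp m = 1 := by
  rw [eexp, show 2 * (π : ℂ) * I * (m : ℝ) = m * (2 * π * I) by push_cast; ring]
  exact exp_int_mul_two_pi_mul_I m

lemma eexp_sub_intCast (x : ℝ) (m : ℤ) : eexp (x - m) = eexp x := by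
  rw [← mul_one (eexp (x - m)), ← eexp_intCast m, ← eexp_add, sub_add_cancel]

lemma eexp_neg (x : ℝ) : eexp (-x) = starRingEnd ℂ (eexp x) := by
  simp only [eexp_eq_cos_add_sin_mul_I, map_add, map_mul, conj_ofReal, conj_I, mul_neg,
    Real.cos_neg, Real.sin_neg]
  push_cast
  ring

lemma eexp_sub_one_mul_cot {θ : ℝ} (hθ : Real.sin (π * θ) ≠ 0) :
    (eexp θ - 1) * (-1 / 2 - (Real.cot (π * θ) / 2 : ℝ) * I) = 1 := by
  have hsc := Real.sin_sq_add_cos_sq (π * θ)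
  rw [eexp_eq_cos_add_sin_mul_I, Real.cot_eq_cos_div_sin,
    show 2 * π * θ = 2 * (π * θ) by ring, Real.cos_two_mul, Real.sin_two_mul]
  generalize Real.sin (π * θ) = s at *
  generalize Real.cos (π * θ) = c at *
  have hsC : (s : ℂ) ≠ 0 := ofReal_ne_zero.mpr hθ
  have hscC : (s : ℂ) ^ 2 + (c : ℂ) ^ 2 = 1 := by exact_mod_cast hsc
  push_cast
  field_simp
  linear_combination (-2 * (c : ℂ) ^ 2 * s) * I_sq - 2 * (c : ℂ) * I * hscC

lemma two_mul_le_sin_pi_mul {δ θ : ℝ} (hδ : 0 ≤ δ) (hδθ : δ ≤ θ) (hθδ : θ ≤ 1 - δ) :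
    2 * δ ≤ Real.sin (π * θ) := by
  wlog hθ : θ ≤ 1 / 2 generalizing θ
  · have := this (θ := 1 - θ) (by linarith) (by linarith) (by linarith)
    rwa [mul_sub, mul_one, Real.sin_pi_sub] at this
  calc 2 * δ ≤ 2 / π * (π * θ) := by field_simp; linarith
    _ ≤ Real.sin (π * θ) := mul_le_sin (mul_nonneg pi_pos.le (by linarith)) (by nlinarith [pi_pos])

lemma abs_cot_pi_mul_le {δ θ : ℝ} (hδ : 0 < δ) (hδθ : δ ≤ θ) (hθδ : θ ≤ 1 - δ) :
    |Real.cot (π * θ)| ≤ 1 / (2 * δ) := by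
  have hsin := two_mul_le_sin_pi_mul hδ.le hδθ hθδ
  have hpos : 0 < Real.sin (π * θ) := by linarith
  rw [Real.cot_eq_cos_div_sin, abs_div, abs_of_pos hpos, div_le_div_iff₀ hpos (by positivity)]
  nlinarith [abs_cos_le_one (π * θ), abs_nonneg (Real.cos (π * θ))]

lemma antitoneOn_cot : AntitoneOn Real.cot (Set.Ioo 0 π) := by
  intro x hx y hy hxy
  have hsx := sin_pos_of_pos_of_lt_pi hx.1 hx.2
  have hsy := sin_pos_of_pos_of_lt_pi hy.1 hy.2
  have hsub : 0 ≤ Real.sin (y - x) :=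
    sin_nonneg_of_nonneg_of_le_pi (by linarith) (by linarith [hy.2, hx.1])
  rw [Real.cot_eq_cos_div_sin, Real.cot_eq_cos_div_sin, div_le_div_iff₀ hsy hsx]
  rw [Real.sin_sub] at hsub
  linarith

lemma Finset.sum_range_succ_eq_of_eq_sub_mul {R : Type*} [CommRing R] (A w : ℕ → R) (L : ℕ)
    (h : ∀ k ≤ L, A k = (A (k + 1) - A k) * w k) :
    ∑ k ∈ range (L + 1), A k =
      A (L + 1) * w L - A 0 * w 0 - ∑ k ∈ range L, A (k + 1) * (w (k + 1) - w k) := by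
  induction L with
  | zero =>
    simp only [zero_add, sum_range_one, range_zero, sum_empty, sub_zero]
    linear_combination h 0 le_rfl
  | succ L ih =>
    rw [Finset.sum_range_succ, ih fun k hk => h k (by omega), Finset.sum_range_succ]
    linear_combination h (L + 1) le_rfl

/-- **Kusmin–Landau inequality**, discrete form. -/
theorem norm_sum_range_eexp_le {g : ℕ → ℝ} {δ : ℝ} (hδ : 0 < δ) {L : ℕ}
    (hφ : ∀ k < L, g (k + 1) - g k ∈ Set.Icc δ (1 - δ))
    (hmono : MonotoneOn (fun k => g (k + 1) - g k) (Set.Iio L)) :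
    ‖∑ k ∈ range (L + 1), eexp (g k)‖ ≤ 2 + 1 / δ := by
  obtain _ | L := L
  · rw [zero_add, sum_range_one, norm_eexp]
    linarith [one_div_pos.mpr hδ]
  set φ : ℕ → ℝ := fun k => g (k + 1) - g k
  set c : ℕ → ℝ := fun k => Real.cot (π * φ k)
  set w : ℕ → ℂ := fun k => -1 / 2 - (c k / 2 : ℝ) * I
  have hπ : ∀ k ≤ L, π * φ k ∈ Set.Ioo 0 π := fun k hk =>
    ⟨mul_pos pi_pos (by linarith [(hφ k (by omega)).1]),
      by nlinarith [pi_pos, (hφ k (by omega)).2]⟩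
  have hc : ∀ k ≤ L, |c k| ≤ 1 / (2 * δ) := fun k hk =>
    abs_cot_pi_mul_le hδ (hφ k (by omega)).1 (hφ k (by omega)).2
  have hc_anti : ∀ k j, k ≤ j → j ≤ L → c j ≤ c k := fun k j hkj hj =>
    antitoneOn_cot (hπ k (by omega)) (hπ j hj) <| mul_le_mul_of_nonneg_left
      (hmono (Set.mem_Iio.mpr (by omega)) (Set.mem_Iio.mpr (by omega)) hkj) pi_pos.le
  have hw : ∀ k, ‖w k‖ ≤ 1 / 2 + |c k| / 2 := fun k => by
    refine (norm_sub_le _ _).trans (le_of_eq ?_)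
    simp only [norm_neg, norm_div, norm_one, RCLike.norm_ofNat, norm_mul, norm_I, mul_one,
      norm_real, Real.norm_eq_abs]
  have hdiff : ∀ k < L, ‖w (k + 1) - w k‖ = (c k - c (k + 1)) / 2 := fun k hk => by
    have : w (k + 1) - w k = ((c k - c (k + 1)) / 2 : ℝ) * I := by
      simp only [w]; push_cast; ring
    rw [this, norm_mul, norm_I, mul_one, norm_real, Real.norm_eq_abs,
      abs_of_nonneg (by linarith [hc_anti k (k + 1) (by omega) (by omega)])]
  have hA : ∀ k ≤ L, eexp (g k) = (eexp (g (k + 1)) - eexp (g k)) * w k := fun k hk => by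
    have hsin : Real.sin (π * φ k) ≠ 0 := (sin_pos_of_pos_of_lt_pi (hπ k hk).1 (hπ k hk).2).ne'
    have hinv : (eexp (φ k) - 1) * w k = 1 := eexp_sub_one_mul_cot hsin
    rw [show g (k + 1) = g k + φ k by simp [φ], eexp_add]
    linear_combination (-eexp (g k)) * hinv
  have hsum : ∑ k ∈ range L, ‖eexp (g (k + 1)) * (w (k + 1) - w k)‖ = (c 0 - c L) / 2 := by
    rw [← Finset.sum_range_sub' c L, Finset.sum_div]
    exact Finset.sum_congr rfl fun k hk => by
      rw [norm_mul, norm_eexp, one_mul, hdiff k (Finset.mem_range.mp hk)]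
  rw [sum_range_succ, Finset.sum_range_succ_eq_of_eq_sub_mul _ w L hA]
  calc _ ≤ ‖eexp (g (L + 1)) * w L‖ + ‖eexp (g 0) * w 0‖
        + ∑ k ∈ range L, ‖eexp (g (k + 1)) * (w (k + 1) - w k)‖ + ‖eexp (g (L + 1))‖ :=
        (norm_add_le _ _).trans <| by
          gcongr
          exact (norm_sub_le _ _).trans <| add_le_add (norm_sub_le _ _) (norm_sum_le _ _)
    _ ≤ 2 + |c 0| + |c L| := by
      rw [norm_mul, norm_mul, norm_eexp, norm_eexp, one_mul, one_mul, hsum]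
      linarith [hw L, hw 0, le_abs_self (c 0), neg_abs_le (c L)]
    _ ≤ 2 + 1 / δ := by
      linarith [hc 0 (Nat.zero_le L), hc L le_rfl, show 1 / (2 * δ) = 1 / δ / 2 by ring]

/-- **Kusmin–Landau inequality**. -/
theorem norm_sum_Icc_eexp_le {g g' : ℝ → ℝ} {p q : ℕ} {δ : ℝ} (m : ℤ) (hδ : 0 < δ)
    (hg : ∀ x ∈ Set.Icc (p : ℝ) q, HasDerivAt g (g' x) x)
    (hmono : MonotoneOn g' (Set.Icc (p : ℝ) q))
    (hg' : ∀ x ∈ Set.Icc (p : ℝ) q, g' x ∈ Set.Icc (m + δ) (m + 1 - δ)) :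
    ‖∑ n ∈ Finset.Icc p q, eexp (g n)‖ ≤ 2 + 1 / δ := by
  rcases lt_or_ge q p with hqp | hpq
  · rw [Finset.Icc_eq_empty_of_lt hqp, sum_empty, norm_zero]
    positivity
  obtain ⟨L, rfl⟩ : ∃ L, q = p + L := ⟨q - p, by omega⟩
  push_cast at hg hmono hg'
  set h : ℕ → ℝ := fun k => g (p + k) - m * (p + k)
  have hmvt : ∀ k < L, ∃ ξ ∈ Set.Ioo ((p : ℝ) + k) (p + k + 1) ∩ Set.Icc (p : ℝ) (p + L),
      g' ξ - m = h (k + 1) - h k := fun k hk => by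
    have hsub : Set.Icc ((p : ℝ) + k) (p + k + 1) ⊆ Set.Icc (p : ℝ) (p + L) := by
      have : (k : ℝ) + 1 ≤ L := by exact_mod_cast hk
      exact Set.Icc_subset_Icc (by simp) (by linarith)
    obtain ⟨ξ, hξ, hslope⟩ := exists_hasDerivAt_eq_slope g g' (by linarith)
      (fun x hx => (hg x (hsub hx)).continuousAt.continuousWithinAt)
      (fun x hx => hg x (hsub (Set.Ioo_subset_Icc_self hx)))
    refine ⟨ξ, ⟨hξ, hsub (Set.Ioo_subset_Icc_self hξ)⟩, ?_⟩
    rw [hslope, add_sub_cancel_left, div_one]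
    simp only [h, Nat.cast_succ, ← add_assoc]
    ring
  have hsum : ∑ n ∈ Finset.Icc p (p + L), eexp (g n) = ∑ k ∈ range (L + 1), eexp (h k) := by
    rw [← Finset.Ico_add_one_right_eq_Icc, Finset.sum_Ico_eq_sum_range,
      show p + L + 1 - p = L + 1 by omega]
    refine Finset.sum_congr rfl fun k _ => ?_
    rw [show h k = g (p + k) - ((m * (p + k) : ℤ) : ℝ) by simp [h], eexp_sub_intCast]
    push_cast
    rfl
  rw [hsum]
  refine norm_sum_range_eexp_le hδ (fun k hk => ?_) (fun k hk j hj hkj => ?_)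
  · obtain ⟨ξ, hξ, heq⟩ := hmvt k hk
    have := hg' ξ hξ.2
    rw [← heq]
    exact ⟨by linarith [this.1], by linarith [this.2]⟩
  · rcases hkj.eq_or_lt with rfl | hlt
    · exact le_rfl
    obtain ⟨ξ, hξ, hξeq⟩ := hmvt k hk
    obtain ⟨η, hη, hηeq⟩ := hmvt j hj
    have hξη : ξ ≤ η := by
      have : (k : ℝ) + 1 ≤ j := by exact_mod_cast hlt
      linarith [hξ.1.2, hη.1.1]
    simp only [← hξeq, ← hηeq]
    linarith [hmono hξ.2 hη.2 hξη]

lemma norm_sum_eexp_le_card (f : ℝ → ℝ) (s : Finset ℕ) : ‖∑ n ∈ s, eexp (f n)‖ ≤ #s :=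
  (norm_sum_le _ _).trans (by simp [norm_eexp])

lemma norm_sum_eexp_neg (f : ℝ → ℝ) (s : Finset ℕ) :
    ‖∑ n ∈ s, eexp (-f n)‖ = ‖∑ n ∈ s, eexp (f n)‖ := by
  simp only [eexp_neg, ← map_sum, RCLike.norm_conj]

lemma card_Ioc_floor_le {a b : ℝ} (ha : 0 ≤ a) (hab : a ≤ b) :
    (#(Ioc ⌊a⌋₊ ⌊b⌋₊) : ℝ) ≤ b - a + 1 := by
  rw [Nat.card_Ioc, Nat.cast_sub (Nat.floor_le_floor hab)]
  linarith [Nat.floor_le (ha.trans hab), Nat.lt_floor_add_one a]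

lemma mem_Icc_of_mem_Ioc_floor {a b : ℝ} {n : ℕ} (ha : 0 ≤ a) (hn : n ∈ Ioc ⌊a⌋₊ ⌊b⌋₊) :
    (n : ℝ) ∈ Set.Icc a b := by
  rw [Finset.mem_Ioc] at hn
  exact ⟨((Nat.floor_lt ha).mp hn.1).le, (Nat.le_floor_iff' (by omega)).mp hn.2⟩

lemma mul_sub_le_sub_of_le_hasDerivAt {g g' : ℝ → ℝ} {a b C : ℝ}
    (hg : ∀ x ∈ Set.Icc a b, HasDerivAt g (g' x) x) (hC : ∀ x ∈ Set.Icc a b, C ≤ g' x)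
    {x y : ℝ} (hx : x ∈ Set.Icc a b) (hy : y ∈ Set.Icc a b) (hxy : x ≤ y) :
    C * (y - x) ≤ g y - g x :=
  (convex_Icc a b).mul_sub_le_image_sub_of_le_deriv
    (fun z hz => (hg z hz).continuousAt.continuousWithinAt)
    (fun z hz => (hg z (interior_subset hz)).differentiableAt.differentiableWithinAt)
    (fun z hz => (hg z (interior_subset hz)).deriv ▸ hC z (interior_subset hz)) x hx y hy hxy

lemma monotoneOn_Icc_of_hasDerivAt_nonneg {g g' : ℝ → ℝ} {a b : ℝ}
    (hg : ∀ x ∈ Set.Icc a b, HasDerivAt g (g' x) x) (hg' : ∀ x ∈ Set.Icc a b, 0 ≤ g' x) :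
    MonotoneOn g (Set.Icc a b) := fun _ hx _ hy hxy => by
  simpa using mul_sub_le_sub_of_le_hasDerivAt hg hg' hx hy hxy

section SecondDerivative

variable {a b : ℝ} {f f' f'' : ℝ → ℝ}

open Classical in
noncomputable def intPreimage (a b : ℝ) (f' : ℝ → ℝ) (I : Set ℝ) : Finset ℕ :=
  {n ∈ Ioc ⌊a⌋₊ ⌊b⌋₊ | f' n ∈ I}

@[simp]
lemma mem_intPreimage {I : Set ℝ} {n : ℕ} :
    n ∈ intPreimage a b f' I ↔ n ∈ Ioc ⌊a⌋₊ ⌊b⌋₊ ∧ f' n ∈ I := by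
  simp [intPreimage]

lemma sum_intPreimage_union {I J : Set ℝ} (h : Disjoint I J) (F : ℕ → ℂ) :
    ∑ n ∈ intPreimage a b f' (I ∪ J), F n =
      ∑ n ∈ intPreimage a b f' I, F n + ∑ n ∈ intPreimage a b f' J, F n := by
  classical
  rw [← Finset.sum_union]
  · congr 1
    ext n
    simp [and_or_left]
  · exact Finset.disjoint_left.mpr fun n hI hJ =>
      h.ne_of_mem (mem_intPreimage.mp hI).2 (mem_intPreimage.mp hJ).2 rfl

lemma exists_intPreimage_eq_Icc {I : Set ℝ} (hI : I.OrdConnected) (ha : 0 ≤ a)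
    (hmono : MonotoneOn f' (Set.Icc a b)) (hne : (intPreimage a b f' I).Nonempty) :
    ∃ p q : ℕ, intPreimage a b f' I = Finset.Icc p q ∧ Set.Icc (p : ℝ) q ⊆ Set.Icc a b ∧
      Set.MapsTo f' (Set.Icc (p : ℝ) q) I := by
  set s := intPreimage a b f' I
  have hp := mem_intPreimage.mp (s.min'_mem hne)
  have hq := mem_intPreimage.mp (s.max'_mem hne)
  have hpab := mem_Icc_of_mem_Ioc_floor ha hp.1
  have hqab := mem_Icc_of_mem_Ioc_floor ha hq.1
  have hsub : Set.Icc (s.min' hne : ℝ) (s.max' hne) ⊆ Set.Icc a b :=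
    Set.Icc_subset_Icc hpab.1 hqab.2
  have hmaps : Set.MapsTo f' (Set.Icc (s.min' hne : ℝ) (s.max' hne)) I := fun x hx =>
    hI.out hp.2 hq.2 ⟨hmono hpab (hsub hx) hx.1, hmono (hsub hx) hqab hx.2⟩
  refine ⟨s.min' hne, s.max' hne, Finset.ext fun n => ⟨fun hn => ?_, fun hn => ?_⟩, hsub, hmaps⟩
  · exact Finset.mem_Icc.mpr ⟨s.min'_le n hn, s.le_max' n hn⟩
  · rw [Finset.mem_Icc] at hn
    have hnI : f' n ∈ I := hmaps ⟨by exact_mod_cast hn.1, by exact_mod_cast hn.2⟩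
    refine mem_intPreimage.mpr ⟨?_, hnI⟩
    have := Finset.mem_Ioc.mp hp.1
    have := Finset.mem_Ioc.mp hq.1
    exact Finset.mem_Ioc.mpr ⟨by omega, by omega⟩

lemma norm_sum_intPreimage_eexp_le {I : Set ℝ} (hI : I.OrdConnected) (ha : 0 ≤ a)
    (hf : ∀ x ∈ Set.Icc a b, HasDerivAt f (f' x) x) (hmono : MonotoneOn f' (Set.Icc a b))
    (m : ℤ) {δ : ℝ} (hδ : 0 < δ) (hIδ : I ⊆ Set.Icc (m + δ) (m + 1 - δ)) :
    ‖∑ n ∈ intPreimage a b f' I, eexp (f n)‖ ≤ 2 + 1 / δ := by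
  rcases (intPreimage a b f' I).eq_empty_or_nonempty with hemp | hne
  · rw [hemp, sum_empty, norm_zero]
    positivity
  obtain ⟨p, q, heq, hsub, hmaps⟩ := exists_intPreimage_eq_Icc hI ha hmono hne
  rw [heq]
  exact norm_sum_Icc_eexp_le m hδ (fun x hx => hf x (hsub hx)) (hmono.mono hsub)
    fun x hx => hIδ (hmaps hx)

lemma card_intPreimage_le {I : Set ℝ} (hI : I.OrdConnected) (ha : 0 ≤ a)
    (hf' : ∀ x ∈ Set.Icc a b, HasDerivAt f' (f'' x) x) {m₀ : ℝ} (hm₀ : 0 < m₀)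
    (hf'' : ∀ x ∈ Set.Icc a b, m₀ ≤ f'' x) {r ℓ : ℝ} (hℓ : 0 ≤ ℓ) (hIℓ : I ⊆ Set.Icc r (r + ℓ)) :
    (#(intPreimage a b f' I) : ℝ) ≤ ℓ / m₀ + 1 := by
  rcases (intPreimage a b f' I).eq_empty_or_nonempty with hemp | hne
  · rw [hemp, card_empty, Nat.cast_zero]
    positivity
  have hgrowth : ∀ x ∈ Set.Icc a b, ∀ y ∈ Set.Icc a b, x ≤ y → m₀ * (y - x) ≤ f' y - f' x :=
    fun x hx y hy => mul_sub_le_sub_of_le_hasDerivAt hf' hf'' hx hy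
  obtain ⟨p, q, heq, hsub, hmaps⟩ := exists_intPreimage_eq_Icc hI ha
    (monotoneOn_Icc_of_hasDerivAt_nonneg hf' fun x hx => hm₀.le.trans (hf'' x hx)) hne
  have hpq' : p ≤ q := Finset.nonempty_Icc.mp (heq ▸ hne)
  have hpq : (p : ℝ) ≤ q := by exact_mod_cast hpq'
  have hp := hIℓ (hmaps (Set.left_mem_Icc.mpr hpq))
  have hq := hIℓ (hmaps (Set.right_mem_Icc.mpr hpq))
  have := hgrowth p (hsub (Set.left_mem_Icc.mpr hpq)) q (hsub (Set.right_mem_Icc.mpr hpq)) hpq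
  have hlen : (q : ℝ) - p ≤ ℓ / m₀ := by
    rw [le_div_iff₀ hm₀]
    linarith [hp.1, hq.2]
  rw [heq, Nat.card_Icc, Nat.cast_sub (by omega)]
  push_cast
  linarith

theorem norm_sum_eexp_le_of_le_deriv2 {B m₀ δ : ℝ} (ha : 0 ≤ a) (hB : 0 ≤ B)
    (hf : ∀ x ∈ Set.Icc a b, HasDerivAt f (f' x) x)
    (hf' : ∀ x ∈ Set.Icc a b, HasDerivAt f' (f'' x) x) (hm₀ : 0 < m₀)
    (hf'' : ∀ x ∈ Set.Icc a b, m₀ ≤ f'' x) (hf'B : ∀ x ∈ Set.Icc a b, |f' x| ≤ B)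
    (hδ : 0 < δ) (hδ2 : δ ≤ 1 / 2) :
    ‖∑ n ∈ Ioc ⌊a⌋₊ ⌊b⌋₊, eexp (f n)‖ ≤ (2 * B + 2) * (3 + 1 / δ + 2 * δ / m₀) := by
  have hmono := monotoneOn_Icc_of_hasDerivAt_nonneg hf' fun x hx => hm₀.le.trans (hf'' x hx)
  set key : ℕ → ℤ := fun n => ⌊f' n + δ⌋
  set T := Finset.Icc ⌊-B + δ⌋ ⌊B + δ⌋
  have hkey : ∀ n ∈ Ioc ⌊a⌋₊ ⌊b⌋₊, key n ∈ T := fun n hn => by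
    have := abs_le.mp (hf'B n (mem_Icc_of_mem_Ioc_floor ha hn))
    exact Finset.mem_Icc.mpr ⟨Int.floor_le_floor (by linarith), Int.floor_le_floor (by linarith)⟩
  have hfiber : ∀ k : ℤ, {n ∈ Ioc ⌊a⌋₊ ⌊b⌋₊ | key n = k} =
      intPreimage a b f' (Set.Ico (k - δ) (k + δ) ∪ Set.Ico (k + δ) (k + 1 - δ)) := fun k => by
    rw [Set.Ico_union_Ico_eq_Ico (by linarith) (by linarith)]
    ext n
    simp only [Finset.mem_filter, mem_intPreimage, Set.mem_Ico, key, Int.floor_eq_iff]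
    constructor <;> rintro ⟨hn, h1, h2⟩ <;> exact ⟨hn, by linarith, by linarith⟩
  have hpiece : ∀ k : ℤ, ‖∑ n ∈ {n ∈ Ioc ⌊a⌋₊ ⌊b⌋₊ | key n = k}, eexp (f n)‖ ≤
      3 + 1 / δ + 2 * δ / m₀ := fun k => by
    rw [hfiber, sum_intPreimage_union Set.Ico_disjoint_Ico_same]
    refine (norm_add_le _ _).trans ?_
    have hnear := card_intPreimage_le Set.ordConnected_Ico ha hf' hm₀ hf'' (by linarith : 0 ≤ 2 * δ)
      (Set.Ico_subset_Icc_self.trans (Set.Icc_subset_Icc le_rfl (by linarith)) :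
        Set.Ico ((k : ℝ) - δ) (k + δ) ⊆ Set.Icc (k - δ) (k - δ + 2 * δ))
    have hfar := norm_sum_intPreimage_eexp_le Set.ordConnected_Ico ha hf hmono k hδ
      Set.Ico_subset_Icc_self
    linarith [norm_sum_eexp_le_card f (intPreimage a b f' (Set.Ico ((k : ℝ) - δ) (k + δ)))]
  have hT : (#T : ℝ) ≤ 2 * B + 2 := by
    rw [Int.card_Icc, ← Int.cast_natCast, Int.toNat_eq_max, Int.cast_max, Int.cast_zero]
    push_cast
    exact max_le (by linarith [Int.floor_le (B + δ), Int.lt_floor_add_one (-B + δ)]) (by linarith)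
  rw [← Finset.sum_fiberwise_of_maps_to hkey]
  calc _ ≤ ∑ k ∈ T, ‖∑ n ∈ {n ∈ Ioc ⌊a⌋₊ ⌊b⌋₊ | key n = k}, eexp (f n)‖ := norm_sum_le _ _
    _ ≤ #T * (3 + 1 / δ + 2 * δ / m₀) :=
      (Finset.sum_le_card_nsmul T _ _ fun k _ => hpiece k).trans_eq (nsmul_eq_mul _ _)
    _ ≤ _ := by gcongr

lemma intPreimage_eq_Ioc {I : Set ℝ} (ha : 0 ≤ a) (h : Set.MapsTo f' (Set.Icc a b) I) :
    intPreimage a b f' I = Ioc ⌊a⌋₊ ⌊b⌋₊ :=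
  Finset.ext fun _ => by simpa using fun hn => h (mem_Icc_of_mem_Ioc_floor ha hn)

lemma norm_sum_eexp_le_of_abs_deriv_le_half {δ : ℝ} (ha : 0 ≤ a) (hδ : 0 < δ)
    (hf : ∀ x ∈ Set.Icc a b, HasDerivAt f (f' x) x) (hmono : MonotoneOn f' (Set.Icc a b))
    (hf'δ : ∀ x ∈ Set.Icc a b, δ ≤ |f' x| ∧ |f' x| ≤ 1 / 2) :
    ‖∑ n ∈ Ioc ⌊a⌋₊ ⌊b⌋₊, eexp (f n)‖ ≤ 2 + 1 / δ := by
  have hne : ∀ x ∈ Set.Icc a b, f' x ≠ 0 := fun x hx h0 => by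
    linarith [h0 ▸ (hf'δ x hx).1, abs_zero (α := ℝ)]
  obtain ⟨m, hm⟩ : ∃ m : ℤ, Set.MapsTo f' (Set.Icc a b) (Set.Icc (m + δ) (m + 1 - δ)) := by
    rcases hasDerivWithinAt_forall_lt_or_forall_gt_of_forall_ne (convex_Icc a b)
      (fun x hx => (hf x hx).hasDerivWithinAt) hne with hneg | hpos
    · refine ⟨-1, fun x hx => ?_⟩
      have := hf'δ x hx
      rw [abs_of_neg (hneg x hx)] at this
      push_cast
      constructor <;> linarith
    · refine ⟨0, fun x hx => ?_⟩
      have := hf'δ x hx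
      rw [abs_of_pos (hpos x hx)] at this
      push_cast
      constructor <;> linarith
  rw [← intPreimage_eq_Ioc ha hm]
  exact norm_sum_intPreimage_eexp_le Set.ordConnected_Icc ha hf hmono m hδ subset_rfl

lemma norm_sum_eexp_le_mul_inv {c₁ c₂ lam : ℝ} (hc₁ : 0 < c₁) (hc₂ : 0 < c₂) (hlam : 0 < lam)
    (ha : 0 ≤ a) (hsmall : c₂ * lam ≤ 1 / 2) (hf : ∀ x ∈ Set.Icc a b, HasDerivAt f (f' x) x)
    (hmono : MonotoneOn f' (Set.Icc a b))
    (hf'b : ∀ x ∈ Set.Icc a b, c₁ * lam ≤ |f' x| ∧ |f' x| ≤ c₂ * lam) :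
    ‖∑ n ∈ Ioc ⌊a⌋₊ ⌊b⌋₊, eexp (f n)‖ ≤ (1 / c₁ + 1 / c₂) * lam⁻¹ := by
  refine (norm_sum_eexp_le_of_abs_deriv_le_half (δ := c₁ * lam) ha (by positivity) hf hmono
    fun x hx => ⟨(hf'b x hx).1, (hf'b x hx).2.trans hsmall⟩).trans ?_
  have : 2 ≤ 1 / (c₂ * lam) := by rw [le_div_iff₀ (by positivity)]; linarith
  rw [show (1 / c₁ + 1 / c₂) * lam⁻¹ = 1 / (c₁ * lam) + 1 / (c₂ * lam) by field_simp]
  linarith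

lemma norm_sum_eexp_le_mul_sqrt_of_le {c₂ c₃ lam : ℝ} (hc₃ : 0 < c₃) (hlam : 0 < lam)
    (hlarge : 1 / 2 < c₂ * lam) (hla : lam ≤ a)
    (hf : ∀ x ∈ Set.Icc a b, HasDerivAt f (f' x) x)
    (hf' : ∀ x ∈ Set.Icc a b, HasDerivAt f' (f'' x) x)
    (hf'' : ∀ x ∈ Set.Icc a b, c₃ * lam / a ≤ f'' x) (hf'B : ∀ x ∈ Set.Icc a b, |f' x| ≤ c₂ * lam) :
    ‖∑ n ∈ Ioc ⌊a⌋₊ ⌊b⌋₊, eexp (f n)‖ ≤ (30 * c₂ + 6 * c₂ / c₃) * (√a * √lam) := by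
  obtain ⟨u, hu, rfl⟩ : ∃ u, 0 < u ∧ u ^ 2 = lam :=
    ⟨√lam, Real.sqrt_pos.mpr hlam, Real.sq_sqrt hlam.le⟩
  obtain ⟨v, hv, rfl⟩ : ∃ v, 0 < v ∧ v ^ 2 = a :=
    ⟨√a, Real.sqrt_pos.mpr (hlam.trans_le hla), Real.sq_sqrt (hlam.trans_le hla).le⟩
  have huv : u ≤ v := (pow_le_pow_iff_left₀ hu.le hv.le two_ne_zero).mp hla
  rw [Real.sqrt_sq hu.le, Real.sqrt_sq hv.le]
  -- `δ = (λ / a) ^ (1/2) / 2` balances the two kinds of pieces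
  refine (norm_sum_eexp_le_of_le_deriv2 (δ := u / (2 * v)) (by positivity) (by positivity) hf hf'
    (by positivity) hf'' hf'B (by positivity) (by rw [div_le_iff₀ (by positivity)]; linarith)).trans ?_
  have hfiber : 3 + 1 / (u / (2 * v)) + 2 * (u / (2 * v)) / (c₃ * u ^ 2 / v ^ 2)
      = 3 + (2 + 1 / c₃) * (v / u) := by
    field_simp
    ring
  rw [hfiber]
  calc _ ≤ 6 * c₂ * u ^ 2 * (3 + (2 + 1 / c₃) * (v / u)) := by gcongr; linarith
    _ = 18 * c₂ * u ^ 2 + (12 * c₂ + 6 * c₂ / c₃) * (v * u) := by field_simp; ring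
    _ ≤ _ := by nlinarith

lemma norm_sum_eexp_le_mul_sqrt {c₂ c₃ lam : ℝ} (hc₂ : 0 < c₂) (hc₃ : 0 < c₃) (hlam : 0 < lam)
    (ha : 1 ≤ a) (hab : a ≤ b) (hb2 : b ≤ 2 * a) (hlarge : 1 / 2 < c₂ * lam)
    (hf : ∀ x ∈ Set.Icc a b, HasDerivAt f (f' x) x)
    (hf' : ∀ x ∈ Set.Icc a b, HasDerivAt f' (f'' x) x)
    (hf'' : ∀ x ∈ Set.Icc a b, c₃ * lam / a ≤ f'' x) (hf'B : ∀ x ∈ Set.Icc a b, |f' x| ≤ c₂ * lam) :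
    ‖∑ n ∈ Ioc ⌊a⌋₊ ⌊b⌋₊, eexp (f n)‖ ≤ (2 + 30 * c₂ + 6 * c₂ / c₃) * (√a * √lam) := by
  rcases le_or_gt lam a with hla | hla
  · refine (norm_sum_eexp_le_mul_sqrt_of_le hc₃ hlam hlarge hla hf hf' hf'' hf'B).trans ?_
    gcongr
    linarith
  have : a ≤ √a * √lam := by
    nlinarith [Real.mul_self_sqrt (by linarith : (0 : ℝ) ≤ a), Real.sqrt_le_sqrt hla.le,
      Real.sqrt_nonneg a]
  calc _ ≤ (#(Ioc ⌊a⌋₊ ⌊b⌋₊) : ℝ) := norm_sum_eexp_le_card f _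
    _ ≤ b - a + 1 := card_Ioc_floor_le (by linarith) hab
    _ ≤ 2 * (√a * √lam) := by linarith
    _ ≤ _ := by gcongr; linarith [div_pos (mul_pos (by norm_num : (0:ℝ) < 6) hc₂) hc₃]

end SecondDerivative

theorem van_der_corput_second_derivative_general (c₁ c₂ c₃ c₄ : ℝ)
    (hc₁ : 0 < c₁) (hc₂ : 0 < c₂) (hc₃ : 0 < c₃) :
    ∃ K > (0 : ℝ), ∀ (a b : ℝ) (f f' f'' : ℝ → ℝ) (lam : ℝ),
      1 ≤ a → a < b → b ≤ 2 * a → 0 < lam →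
      (∀ x ∈ Set.Icc a b, HasDerivAt f (f' x) x) →
      (∀ x ∈ Set.Icc a b, HasDerivAt f' (f'' x) x) →
      ContinuousOn f'' (Set.Icc a b) →
      (∀ x ∈ Set.Icc a b, c₁ * lam ≤ |f' x| ∧ |f' x| ≤ c₂ * lam) →
      (∀ x ∈ Set.Icc a b, c₃ * lam / a ≤ |f'' x| ∧ |f'' x| ≤ c₄ * lam / a) →
      (‖∑ n ∈ Finset.Ioc ⌊a⌋₊ ⌊b⌋₊, eexp (f n)‖ ≤
          K * (a ^ ((1 : ℝ) / 2) * lam ^ ((1 : ℝ) / 2) + lam⁻¹)) ∧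
      (c₂ * lam ≤ 1 / 2 →
        ‖∑ n ∈ Finset.Ioc ⌊a⌋₊ ⌊b⌋₊, eexp (f n)‖ ≤ K * lam⁻¹) := by
  obtain ⟨K, hK₀, hK_small, hK_large⟩ : ∃ K : ℝ, 0 < K ∧ 1 / c₁ + 1 / c₂ ≤ K ∧
      2 + 30 * c₂ + 6 * c₂ / c₃ ≤ K :=
    ⟨1 / c₁ + 1 / c₂ + (2 + 30 * c₂ + 6 * c₂ / c₃), by positivity,
      le_add_of_nonneg_right (by positivity), le_add_of_nonneg_left (by positivity)⟩
  refine ⟨K, hK₀, ?_⟩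
  rintro a b f f' f'' lam ha hab hb2 hlam hf hf' - hf'b hf''b
  rw [← Real.sqrt_eq_rpow, ← Real.sqrt_eq_rpow]
  wlog hpos : ∀ x ∈ Set.Icc a b, 0 < f'' x generalizing f f' f''
  · have hneg := (hasDerivWithinAt_forall_lt_or_forall_gt_of_forall_ne (convex_Icc a b)
      (fun x hx => (hf' x hx).hasDerivWithinAt) (m := 0) fun x hx h0 => by
        linarith [h0 ▸ (hf''b x hx).1, abs_zero (α := ℝ), show 0 < c₃ * lam / a by positivity]
      ).resolve_right hpos
    simpa only [norm_sum_eexp_neg] using this (fun x => -f x) (fun x => -f' x) (fun x => -f'' x)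
      (fun x hx => (hf x hx).neg) (fun x hx => (hf' x hx).neg) (by simpa only [abs_neg] using hf'b)
      (by simpa only [abs_neg] using hf''b) fun x hx => neg_pos.mpr (hneg x hx)
  have hsmall : c₂ * lam ≤ 1 / 2 → ‖∑ n ∈ Ioc ⌊a⌋₊ ⌊b⌋₊, eexp (f n)‖ ≤ K * lam⁻¹ := fun hsm =>
    (norm_sum_eexp_le_mul_inv hc₁ hc₂ hlam (by linarith) hsm hf
      (monotoneOn_Icc_of_hasDerivAt_nonneg hf' fun x hx => (hpos x hx).le) hf'b).trans
      (by gcongr)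
  refine ⟨?_, hsmall⟩
  rcases le_or_gt (c₂ * lam) (1 / 2) with hsm | hlarge
  · exact (hsmall hsm).trans (by gcongr; exact le_add_of_nonneg_left (by positivity))
  · exact (norm_sum_eexp_le_mul_sqrt hc₂ hc₃ hlam ha hab.le hb2 hlarge hf hf'
      (fun x hx => (abs_of_pos (hpos x hx)) ▸ (hf''b x hx).1) fun x hx => (hf'b x hx).2).trans
      (by gcongr; exact le_add_of_nonneg_right (by positivity))

theorem van_der_corput_second_derivative (c₁ c₂ c₃ c₄ : ℝ)
    (hc₁ : 0 < c₁) (hc₂ : 0 < c₂) (hc₃ : 0 < c₃) (hc₄ : 0 < c₄) :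
    ∃ K > (0 : ℝ), ∀ (a b : ℝ) (f f' f'' : ℝ → ℝ) (lam : ℝ),
      1 ≤ a → a < b → b ≤ 2 * a → 0 < lam →
      (∀ x ∈ Set.Icc a b, HasDerivAt f (f' x) x) →
      (∀ x ∈ Set.Icc a b, HasDerivAt f' (f'' x) x) →
      ContinuousOn f'' (Set.Icc a b) →
      (∀ x ∈ Set.Icc a b, c₁ * lam ≤ |f' x| ∧ |f' x| ≤ c₂ * lam) →
      (∀ x ∈ Set.Icc a b, c₃ * lam / a ≤ |f'' x| ∧ |f'' x| ≤ c₄ * lam / a) →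
      (‖∑ n ∈ Finset.Ioc ⌊a⌋₊ ⌊b⌋₊, eexp (f n)‖ ≤
          K * (a ^ ((1 : ℝ) / 2) * lam ^ ((1 : ℝ) / 2) + lam⁻¹)) ∧
      (c₂ * lam ≤ 1 / 2 →
        ‖∑ n ∈ Finset.Ioc ⌊a⌋₊ ⌊b⌋₊, eexp (f n)‖ ≤ K * lam⁻¹) :=
  van_der_corput_second_derivative_general c₁ c₂ c₃ c₄ hc₁ hc₂ hc₃
end

section
/- Let Y > 0, let 𝓘 be a subinterval of (Y, 2Y], let J be a positive integer, and let (z_n) be complex numbers indexed by the integers n ∈ 𝓘. Then |Σ_{n ∈ 𝓘} z_n|² ≤ (1 + Y/J) · Σ_{|j| ≤ J} (1 − |j|/J) Σ_{n : n ∈ 𝓘 and n+j ∈ 𝓘} z_{n+j} · conj(z_n), where j and n run over integers (the right-hand side is automatically a nonnegative real number). -/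
/-!
Write `S` for the sum over `I = (⌊c⌋, ⌊d⌋]` and extend `z` by zero outside `I`. Every shift
`k ∈ [1, J]` gives `S = ∑_m z (m + k)` with `m` running over one interval `M` of length
`|I| + J - 1 ≤ Y + J`, so `J S = ∑_{m ∈ M} ∑_{k=1}^J z (m + k)`. Cauchy–Schwarz over `m` gives
`J² |S|² ≤ |M| ∑_m |∑_k z (m + k)|²`; expanding the square, the inner sum over `m` of
`z (m + k) conj (z (m + l))` is the correlation at lag `j = k - l`, and each lag `|j| ≤ J` arises
from exactly `J - |j|` pairs `(k, l)`.
-/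

open scoped Classical

open Finset ComplexConjugate

theorem sum_Icc_add_eq_sum_Ioc {E : Type*} [AddCommMonoid E] {f : ℤ → E} {a b : ℤ}
    (hf : ∀ n ∉ Ioc a b, f n = 0) {H k : ℤ} (hk : k ∈ Icc 1 H) :
    ∑ m ∈ Icc (a + 1 - H) (b - 1), f (m + k) = ∑ n ∈ Ioc a b, f n := by
  rw [mem_Icc] at hk
  have hsub : Ioc a b ⊆ Icc (a + 1 - H + k) (b - 1 + k) := fun n hn => by
    rw [mem_Ioc] at hn; rw [mem_Icc]; omega
  calc ∑ m ∈ Icc (a + 1 - H) (b - 1), f (m + k)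
      = ∑ n ∈ (Icc (a + 1 - H) (b - 1)).map (addRightEmbedding k), f n :=
        (sum_map _ (addRightEmbedding k) f).symm
    _ = ∑ n ∈ Ioc a b, f n := by
      rw [map_add_right_Icc]
      exact (sum_subset hsub fun n _ hn => hf n hn).symm

theorem card_filter_sub_eq (H : ℕ) (j : ℤ) :
    #{p ∈ Icc (1 : ℤ) H ×ˢ Icc (1 : ℤ) H | p.1 - p.2 = j} = ((H : ℤ) - |j|).toNat := by
  have hfiber : {p ∈ Icc (1 : ℤ) H ×ˢ Icc (1 : ℤ) H | p.1 - p.2 = j}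
      = (Icc (max 1 (1 + j)) (min (H : ℤ) (H + j))).image fun k => (k, k - j) := by
    ext ⟨k, l⟩
    simp only [mem_filter, mem_product, mem_image, mem_Icc, Prod.mk.injEq]
    constructor
    · rintro ⟨⟨⟨hk₁, hk₂⟩, hl₁, hl₂⟩, rfl⟩
      exact ⟨k, ⟨by omega, by omega⟩, rfl, by omega⟩
    · rintro ⟨k, ⟨hk₁, hk₂⟩, rfl, rfl⟩
      exact ⟨⟨⟨by omega, by omega⟩, by omega, by omega⟩, by omega⟩
  rw [hfiber, card_image_of_injective _ fun a b h => congrArg Prod.fst h, Int.card_Icc]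
  rcases abs_cases j with ⟨h, _⟩ | ⟨h, _⟩ <;> rw [h] <;> omega

theorem sum_Icc_sum_Icc_sub {E : Type*} [AddCommGroup E] [Module ℝ E] (H : ℕ) (g : ℤ → E) :
    ∑ k ∈ Icc (1 : ℤ) H, ∑ l ∈ Icc (1 : ℤ) H, g (k - l)
      = ∑ j ∈ Icc (-(H : ℤ)) H, ((H : ℝ) - |(j : ℝ)|) • g j := by
  have hmaps : ∀ p ∈ Icc (1 : ℤ) H ×ˢ Icc (1 : ℤ) H, p.1 - p.2 ∈ Icc (-(H : ℤ)) H := by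
    intro p hp
    simp only [mem_product, mem_Icc] at hp ⊢
    omega
  rw [← sum_product' (f := fun k l => g (k - l)), ← sum_fiberwise_of_maps_to' hmaps]
  refine sum_congr rfl fun j hj => ?_
  have hcard : ((((H : ℤ) - |j|).toNat : ℕ) : ℝ) = H - |(j : ℝ)| := by
    have := Int.toNat_of_nonneg (sub_nonneg.2 (abs_le.2 (mem_Icc.1 hj)))
    rw [← Int.cast_abs]
    exact_mod_cast this
  rw [sum_const, card_filter_sub_eq, ← Nat.cast_smul_eq_nsmul ℝ, hcard]

theorem norm_sum_sq_eq_re_sum_sum {ι : Type*} (s : Finset ι) (v : ι → ℂ) :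
    ‖∑ i ∈ s, v i‖ ^ 2 = (∑ i ∈ s, ∑ i' ∈ s, v i * conj (v i')).re := by
  rw [← sum_mul_sum, ← map_sum, Complex.mul_conj, Complex.normSq_eq_norm_sq, Complex.ofReal_re]

section VanDerCorput

variable {a b : ℤ} {w : ℤ → ℂ}

noncomputable def shiftCorrelation (I : Finset ℤ) (w : ℤ → ℂ) (j : ℤ) : ℂ :=
  ∑ n ∈ I, w (n + j) * conj (w n)

theorem sum_norm_sq_sum_Icc_add_eq (hw : ∀ n ∉ Ioc a b, w n = 0) (H : ℕ) :
    ∑ m ∈ Icc (a + 1 - H) (b - 1), ‖∑ k ∈ Icc (1 : ℤ) H, w (m + k)‖ ^ 2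
      = (∑ j ∈ Icc (-(H : ℤ)) H, ((H : ℝ) - |(j : ℝ)|) • shiftCorrelation (Ioc a b) w j).re := by
  have hshift : ∀ k ∈ Icc (1 : ℤ) H, ∀ l ∈ Icc (1 : ℤ) H,
      ∑ m ∈ Icc (a + 1 - H) (b - 1), w (m + k) * conj (w (m + l))
        = shiftCorrelation (Ioc a b) w (k - l) := fun k _ l hl => by
    rw [shiftCorrelation, ← sum_Icc_add_eq_sum_Ioc (fun n hn => by simp [hw n hn]) hl]
    exact sum_congr rfl fun m _ => by rw [add_add_sub_cancel]
  simp only [norm_sum_sq_eq_re_sum_sum, ← Complex.re_sum]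
  rw [← sum_Icc_sum_Icc_sub, sum_comm]
  congr 1
  refine sum_congr rfl fun k hk => ?_
  rw [sum_comm]
  exact sum_congr rfl fun l hl => hshift k hk l hl

theorem sq_mul_norm_sq_sum_Ioc_le (hw : ∀ n ∉ Ioc a b, w n = 0) (H : ℕ) :
    (H : ℝ) ^ 2 * ‖∑ n ∈ Ioc a b, w n‖ ^ 2 ≤ #(Icc (a + 1 - H) (b - 1)) *
      ∑ m ∈ Icc (a + 1 - H) (b - 1), ‖∑ k ∈ Icc (1 : ℤ) H, w (m + k)‖ ^ 2 := by
  have hwindow : (H : ℂ) * ∑ n ∈ Ioc a b, w n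
      = ∑ m ∈ Icc (a + 1 - H) (b - 1), ∑ k ∈ Icc (1 : ℤ) H, w (m + k) := by
    rw [sum_comm, sum_congr rfl fun k hk => sum_Icc_add_eq_sum_Ioc hw hk, sum_const]
    simp
  calc (H : ℝ) ^ 2 * ‖∑ n ∈ Ioc a b, w n‖ ^ 2 = ‖(H : ℂ) * ∑ n ∈ Ioc a b, w n‖ ^ 2 := by
        rw [norm_mul, mul_pow, Complex.norm_natCast]
    _ ≤ (∑ m ∈ Icc (a + 1 - H) (b - 1), ‖∑ k ∈ Icc (1 : ℤ) H, w (m + k)‖) ^ 2 := by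
        rw [hwindow]; gcongr; exact norm_sum_le _ _
    _ ≤ _ := sq_sum_le_card_mul_sum_sq

theorem norm_sq_sum_Ioc_le (hw : ∀ n ∉ Ioc a b, w n = 0) {H : ℕ} (hH : 0 < H) {L : ℝ}
    (hL : #(Icc (a + 1 - H) (b - 1)) ≤ L) :
    ‖∑ n ∈ Ioc a b, w n‖ ^ 2 ≤ L / H * (∑ j ∈ Icc (-(H : ℤ)) H,
      ((1 - |(j : ℝ)| / H : ℝ) : ℂ) * shiftCorrelation (Ioc a b) w j).re := by
  set R := ∑ j ∈ Icc (-(H : ℤ)) H, ((1 - |(j : ℝ)| / H : ℝ) : ℂ) * shiftCorrelation (Ioc a b) w j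
  have hH' : (0 : ℝ) < H := Nat.cast_pos.2 hH
  have hweights : ∑ j ∈ Icc (-(H : ℤ)) H, ((H : ℝ) - |(j : ℝ)|) • shiftCorrelation (Ioc a b) w j
      = (H : ℝ) • R := by
    rw [smul_sum]
    refine sum_congr rfl fun j _ => ?_
    rw [← Complex.real_smul, smul_smul]
    field_simp
  have hsq := sum_norm_sq_sum_Icc_add_eq hw H
  rw [hweights, Complex.smul_re, smul_eq_mul] at hsq
  have hR : 0 ≤ R.re := nonneg_of_mul_nonneg_right (hsq ▸ by positivity) hH'
  rw [← mul_le_mul_iff_of_pos_left (pow_pos hH' 2)]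
  calc (H : ℝ) ^ 2 * ‖∑ n ∈ Ioc a b, w n‖ ^ 2 ≤ #(Icc (a + 1 - H) (b - 1)) * (H * R.re) :=
        hsq ▸ sq_mul_norm_sq_sum_Ioc_le hw H
    _ ≤ L * (H * R.re) := by gcongr
    _ = (H : ℝ) ^ 2 * (L / H * R.re) := by field_simp

end VanDerCorput

theorem Int.mem_Ioc_floor_floor_iff {α : Type*} [Ring α] [LinearOrder α] [IsStrictOrderedRing α]
    [FloorRing α] {c d : α} {n : ℤ} : n ∈ Ioc ⌊c⌋ ⌊d⌋ ↔ (n : α) ∈ Set.Ioc c d := by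
  rw [mem_Ioc, Set.mem_Ioc, Int.floor_lt, Int.le_floor]

theorem card_Icc_floor_le {Y c d : ℝ} (hsub : Set.Ioc c d ⊆ Set.Ioc Y (2 * Y))
    (hcd : ⌊c⌋ < ⌊d⌋) (J : ℕ) : (#(Icc (⌊c⌋ + 1 - J) (⌊d⌋ - 1)) : ℝ) ≤ Y + J := by
  have hlt : c < d := (Int.floor_lt.1 hcd).trans_le (Int.floor_le d)
  have hlen : d - c ≤ Y := by
    obtain ⟨hd, hc⟩ := (Set.Ioc_subset_Ioc_iff hlt).1 hsub
    linarith
  have hcard : ((#(Icc (⌊c⌋ + 1 - J) (⌊d⌋ - 1)) : ℕ) : ℤ) = ⌊d⌋ - ⌊c⌋ - 1 + J := by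
    rw [Int.card_Icc, Int.toNat_of_nonneg (by omega)]
    ring
  have hcard' : (#(Icc (⌊c⌋ + 1 - J) (⌊d⌋ - 1)) : ℝ) = ⌊d⌋ - ⌊c⌋ - 1 + J := mod_cast hcard
  linarith [Int.floor_le d, Int.sub_one_lt_floor c]

theorem weyl_van_der_corput_general (Y : ℝ) (c d : ℝ)
    (hsub : Set.Ioc c d ⊆ Set.Ioc Y (2 * Y)) (J : ℕ) (hJ : 0 < J) (z : ℤ → ℂ) :
    ‖∑ n ∈ Finset.Ioc ⌊c⌋ ⌊d⌋, z n‖ ^ 2 ≤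
      (1 + Y / (J : ℝ)) *
        (∑ j ∈ Finset.Icc (-(J : ℤ)) (J : ℤ),
          ((1 - |(j : ℝ)| / (J : ℝ) : ℝ) : ℂ) *
            ∑ n ∈ (Finset.Ioc ⌊c⌋ ⌊d⌋).filter (fun n => ((n + j : ℤ) : ℝ) ∈ Set.Ioc c d),
              z (n + j) * (starRingEnd ℂ) (z n)).re := by
  rcases le_or_gt ⌊d⌋ ⌊c⌋ with hdc | hcd
  · simp [Ioc_eq_empty_of_le hdc]
  set I := Ioc ⌊c⌋ ⌊d⌋
  set w : ℤ → ℂ := fun n => if n ∈ I then z n else 0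
  have hsum : ∑ n ∈ I, z n = ∑ n ∈ I, w n := sum_congr rfl fun n hn => (if_pos hn).symm
  have hcorr : ∀ j : ℤ, ∑ n ∈ I with ((n + j : ℤ) : ℝ) ∈ Set.Ioc c d, z (n + j) * conj (z n)
      = shiftCorrelation I w j := fun j => by
    rw [sum_filter, shiftCorrelation]
    refine sum_congr rfl fun n hn => ?_
    simp only [w, if_pos hn, ← Int.mem_Ioc_floor_floor_iff, ite_mul, zero_mul]
    rfl
  have hJY : 1 + Y / J = (Y + J) / J := by field_simp; ring
  simp only [hsum, hcorr, hJY]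
  exact norm_sq_sum_Ioc_le (fun n hn => if_neg hn) hJ (card_Icc_floor_le hsub hcd J)

theorem weyl_van_der_corput (Y : ℝ) (hY : 0 < Y) (c d : ℝ)
    (hsub : Set.Ioc c d ⊆ Set.Ioc Y (2 * Y)) (J : ℕ) (hJ : 0 < J) (z : ℤ → ℂ) :
    ‖∑ n ∈ Finset.Ioc ⌊c⌋ ⌊d⌋, z n‖ ^ 2 ≤
      (1 + Y / (J : ℝ)) *
        (∑ j ∈ Finset.Icc (-(J : ℤ)) (J : ℤ),
          ((1 - |(j : ℝ)| / (J : ℝ) : ℝ) : ℂ) *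
            ∑ n ∈ (Finset.Ioc ⌊c⌋ ⌊d⌋).filter (fun n => ((n + j : ℤ) : ℝ) ∈ Set.Ioc c d),
              z (n + j) * (starRingEnd ℂ) (z n)).re :=
  weyl_van_der_corput_general Y c d hsub J hJ z
end

section
/- Let 1/2 < α < 1, H ≥ 1, N ≥ 1 be reals and Δ > 0. Let S(H, N, Δ, α) be the number of quadruples of integers (h₁, h₂, n₁, n₂) with H < h₁, h₂ ≤ 2H and N < n₁, n₂ ≤ 2N satisfying |h₁ n₁^α − h₂ n₂^α| ≤ Δ. Then there is an absolute constant C such that S(H, N, Δ, α) ≤ C (H N log(2HN) + Δ H N^{2−α}). -/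
/-!
Write `r = h₁ / h₂` and `s = n₂ / n₁` in lowest terms. The inequality forces
`|r - s ^ α| ≤ ε := Δ / (H N ^ α)`, and a pair `(r, s)` comes from at most
`(2H / den r) (2N / den s)` quadruples. Group the pairs by the dyadic sizes of `den r` and `den s`,
`2 ^ i ≤ den r < 2 ^ (i + 1)` and `2 ^ j ≤ den s < 2 ^ (j + 1)`. Distinct rationals with
denominators at most `2 ^ (i + 1)` are `4 ^ -(i + 1)`-separated, and `|s - s'| ≤ 4 |s ^ α - s' ^ α|`
on `[0, 2]`, so a block holds `O(ε 4 ^ (i + j) + 4 ^ min i j)` pairs. With weight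
`HN / 2 ^ (i + j)` the first term sums to `O(ε H² N²) = O(Δ H N ^ (2 - α))` and the second to
`O(HN)` per dyadic level, i.e. to `O(HN log 2HN)`.
-/

open scoped Classical

open Finset

lemma card_le_div_add_one_of_separated {ι : Type*} (S : Finset ι) (f : ι → ℝ) {g L : ℝ}
    (hg : 0 < g) (hL : 0 ≤ L) (hsep : ∀ x ∈ S, ∀ y ∈ S, x ≠ y → g ≤ |f x - f y|)
    (hdiam : ∀ x ∈ S, ∀ y ∈ S, |f x - f y| ≤ L) :
    (#S : ℝ) ≤ L / g + 1 := by
  rcases S.eq_empty_or_nonempty with rfl | hS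
  · simp only [card_empty, CharP.cast_eq_zero]
    positivity
  obtain ⟨x₀, hx₀, hmin⟩ := S.exists_min_image f hS
  set bucket : ι → ℕ := fun x => ⌊(f x - f x₀) / g⌋₊
  have hmaps : ∀ x ∈ S, bucket x ∈ range (⌊L / g⌋₊ + 1) := fun x hx => by
    rw [mem_range, Nat.lt_succ_iff]
    refine Nat.floor_le_floor (div_le_div_of_nonneg_right ?_ hg.le)
    exact (le_abs_self _).trans (hdiam x hx x₀ hx₀)
  have hinj : Set.InjOn bucket S := fun x hx y hy hxy => by
    by_contra hne
    have hfloor : ⌊(f x - f x₀) / g⌋ = ⌊(f y - f x₀) / g⌋ := by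
      rw [← Int.natCast_floor_eq_floor (div_nonneg (sub_nonneg.2 (hmin x hx)) hg.le),
        ← Int.natCast_floor_eq_floor (div_nonneg (sub_nonneg.2 (hmin y hy)) hg.le)]
      exact congrArg _ hxy
    have h := Int.abs_sub_lt_one_of_floor_eq_floor hfloor
    rw [← sub_div, sub_sub_sub_cancel_right, abs_div, abs_of_pos hg, div_lt_one hg] at h
    exact (hsep x hx y hy hne).not_gt h
  calc (#S : ℝ) ≤ #(range (⌊L / g⌋₊ + 1)) := mod_cast card_le_card_of_injOn bucket hmaps hinj
    _ ≤ L / g + 1 := by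
      rw [card_range, Nat.cast_succ]
      gcongr
      exact Nat.floor_le (by positivity)

lemma Rat.one_div_den_mul_den_le_abs_sub {p q : ℚ} (h : p ≠ q) :
    1 / ((p.den : ℝ) * q.den) ≤ |(p : ℝ) - q| := by
  have hx : p - q ≠ 0 := sub_ne_zero.2 h
  have hden : (((p - q).den : ℕ) : ℝ) ≤ p.den * q.den := by
    exact_mod_cast Nat.le_of_dvd (by positivity) (Rat.sub_den_dvd p q)
  have hnum : (1 : ℝ) ≤ |((p - q).num : ℝ)| := by
    exact_mod_cast Int.one_le_abs (Rat.num_ne_zero.2 hx)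
  have hmul : |((p - q : ℚ) : ℝ)| * (p - q).den = |((p - q).num : ℝ)| := by
    have e : ((p - q : ℚ) : ℝ) * (p - q).den = (p - q).num := by
      exact_mod_cast Rat.mul_den_eq_num (p - q)
    rw [← e, abs_mul, Nat.abs_cast]
  push_cast at hmul
  rw [div_le_iff₀ (by positivity)]
  nlinarith [abs_nonneg ((p : ℝ) - q)]

lemma card_le_mul_sq_add_one_of_den_le {ι : Type*} (S : Finset ι) (f : ι → ℚ) {M : ℕ} {L : ℝ}
    (hM : 0 < M) (hL : 0 ≤ L) (hf : Set.InjOn f S) (hden : ∀ x ∈ S, (f x).den ≤ M)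
    (hdiam : ∀ x ∈ S, ∀ y ∈ S, |(f x : ℝ) - f y| ≤ L) :
    (#S : ℝ) ≤ L * M ^ 2 + 1 := by
  have hsep : ∀ x ∈ S, ∀ y ∈ S, x ≠ y → 1 / (M : ℝ) ^ 2 ≤ |(f x : ℝ) - f y| := by
    intro x hx y hy hxy
    refine le_trans ?_ (Rat.one_div_den_mul_den_le_abs_sub fun h => hxy (hf hx hy h))
    have hx' : ((f x).den : ℝ) ≤ M := by exact_mod_cast hden x hx
    have hy' : ((f y).den : ℝ) ≤ M := by exact_mod_cast hden y hy
    rw [sq]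
    gcongr
  simpa [div_div_eq_mul_div] using
    card_le_div_add_one_of_separated S (fun x => (f x : ℝ)) (by positivity) hL hsep hdiam

lemma card_le_of_den_le_of_diam_le (P : Finset (ℚ × ℚ)) {A B : ℕ} {L₁ L₂ : ℝ}
    (hA : 0 < A) (hB : 0 < B) (hL₁ : 0 ≤ L₁) (hL₂ : 0 ≤ L₂)
    (hden : ∀ p ∈ P, p.1.den ≤ A ∧ p.2.den ≤ B)
    (hdiam₁ : ∀ p ∈ P, ∀ q ∈ P, |(p.1 : ℝ) - q.1| ≤ L₁)
    (hdiam₂ : ∀ p ∈ P, ∀ q ∈ P, p.1 = q.1 → |(p.2 : ℝ) - q.2| ≤ L₂) :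
    (#P : ℝ) ≤ (L₁ * A ^ 2 + 1) * (L₂ * B ^ 2 + 1) := by
  have hfst : (#(P.image Prod.fst) : ℝ) ≤ L₁ * A ^ 2 + 1 := by
    refine card_le_mul_sq_add_one_of_den_le _ id hA hL₁ (Set.injOn_id _) ?_ ?_ <;>
      simp only [mem_image, id, forall_exists_index, and_imp]
    · rintro _ p hp rfl
      exact (hden p hp).1
    · rintro _ p hp rfl _ q hq rfl
      exact hdiam₁ p hp q hq
  have hfiber : ∀ r ∈ P.image Prod.fst, (#{p ∈ P | p.1 = r} : ℝ) ≤ L₂ * B ^ 2 + 1 := by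
    intro r _
    refine card_le_mul_sq_add_one_of_den_le _ Prod.snd hB hL₂ ?_ ?_ ?_ <;>
      simp only [coe_filter, Set.InjOn, Set.mem_ofPred_eq, mem_filter, and_imp]
    · rintro p hp rfl q hq hpq h
      exact Prod.ext hpq.symm h
    · exact fun p hp _ => (hden p hp).2
    · rintro p hp rfl q hq hpq
      exact hdiam₂ p hp q hq hpq.symm
  calc (#P : ℝ) = ∑ r ∈ P.image Prod.fst, (#{p ∈ P | p.1 = r} : ℝ) := by
        exact_mod_cast card_eq_sum_card_fiberwise fun p hp => mem_image_of_mem Prod.fst hp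
    _ ≤ ∑ r ∈ P.image Prod.fst, (L₂ * B ^ 2 + 1) := sum_le_sum hfiber
    _ ≤ (L₁ * A ^ 2 + 1) * (L₂ * B ^ 2 + 1) := by
      rw [sum_const, nsmul_eq_mul]
      gcongr

lemma mul_rpow_sub_one_mul_sub_le_rpow_sub_rpow {α M x y : ℝ} (hα : 0 < α) (hα1 : α ≤ 1)
    (hx : 0 ≤ x) (hxy : x ≤ y) (hy : y ≤ M) :
    α * M ^ (α - 1) * (y - x) ≤ y ^ α - x ^ α := by
  refine (convex_Icc 0 M).mul_sub_le_image_sub_of_le_deriv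
    (Real.continuous_rpow_const hα.le).continuousOn ?_ ?_ x ⟨hx, hxy.trans hy⟩ y
    ⟨hx.trans hxy, hy⟩ hxy
  · rw [interior_Icc]
    exact fun t ht =>
      (Real.hasDerivAt_rpow_const (Or.inl ht.1.ne')).differentiableAt.differentiableWithinAt
  · rw [interior_Icc]
    intro t ht
    rw [Real.deriv_rpow_const]
    exact mul_le_mul_of_nonneg_left (Real.rpow_le_rpow_of_nonpos ht.1 ht.2.le (by linarith)) hα.le

lemma abs_sub_le_four_mul_abs_rpow_sub_rpow {α x y : ℝ} (hα : 1 / 2 ≤ α) (hα1 : α ≤ 1)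
    (hx : x ∈ Set.Icc (0 : ℝ) 2) (hy : y ∈ Set.Icc (0 : ℝ) 2) :
    |x - y| ≤ 4 * |x ^ α - y ^ α| := by
  have hslope : 1 / 4 ≤ α * (2 : ℝ) ^ (α - 1) := by
    have h : (2 : ℝ) ^ (-1 : ℝ) ≤ 2 ^ (α - 1) :=
      Real.rpow_le_rpow_of_exponent_le one_le_two (by linarith)
    rw [Real.rpow_neg_one] at h
    nlinarith
  wlog hxy : x ≤ y generalizing x y
  · rw [abs_sub_comm, abs_sub_comm (x ^ α)]
    exact this hy hx (le_of_not_ge hxy)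
  have h := mul_rpow_sub_one_mul_sub_le_rpow_sub_rpow (by linarith) hα1 hx.1 hxy hy.2
  rw [abs_sub_comm, abs_sub_comm (x ^ α), abs_of_nonneg (sub_nonneg.2 hxy)]
  nlinarith [le_abs_self (y ^ α - x ^ α), sub_nonneg.2 hxy]

lemma sum_range_four_pow_min_div_le (i L : ℕ) :
    ∑ j ∈ range L, (4 : ℝ) ^ min i j / (2 ^ i * 2 ^ j) ≤ 3 := by
  have h4 : ∀ k : ℕ, (4 : ℝ) ^ k = 2 ^ k * 2 ^ k := fun k => by rw [← mul_pow]; norm_num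
  have hlow : ∀ j ∈ range (i + 1),
      (4 : ℝ) ^ min i (i + 1 - 1 - j) / (2 ^ i * 2 ^ (i + 1 - 1 - j)) = (1 / 2) ^ j := by
    intro j hj
    obtain ⟨k, rfl⟩ : ∃ k, i = k + j := ⟨i - j, by rw [mem_range] at hj; omega⟩
    rw [show k + j + 1 - 1 - j = k by omega, min_eq_right (by omega), h4, pow_add, one_div_pow]
    field_simp
  have hhigh : ∀ k ∈ range L,
      (4 : ℝ) ^ min i (i + 1 + k) / (2 ^ i * 2 ^ (i + 1 + k)) = 1 / 2 * (1 / 2) ^ k := by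
    intro k _
    rw [min_eq_left (by omega), h4, pow_add, pow_add, one_div_pow]
    field_simp
  calc ∑ j ∈ range L, (4 : ℝ) ^ min i j / (2 ^ i * 2 ^ j)
      ≤ ∑ j ∈ range (i + 1 + L), (4 : ℝ) ^ min i j / (2 ^ i * 2 ^ j) :=
        sum_le_sum_of_subset_of_nonneg (range_subset_range.2 (by omega))
          fun _ _ _ => by positivity
    _ = ∑ j ∈ range (i + 1), (1 / 2 : ℝ) ^ j + 1 / 2 * ∑ k ∈ range L, (1 / 2 : ℝ) ^ k := by
        rw [sum_range_add, ← sum_range_reflect, sum_congr rfl hlow, sum_congr rfl hhigh,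
          mul_sum]
    _ ≤ 2 + 1 / 2 * 2 := by gcongr <;> exact sum_geometric_two_le _
    _ = 3 := by norm_num

lemma sum_range_two_pow_le (n : ℕ) : ∑ i ∈ range n, (2 : ℝ) ^ i ≤ 2 ^ n := by
  exact_mod_cast (Nat.geomSum_lt le_rfl fun k hk => mem_range.1 hk).le

lemma sum_dyadic_blocks_le (K L : ℕ) {ε X Y : ℝ} (hε : 0 ≤ ε) (hX : 0 ≤ X) (hY : 0 ≤ Y) :
    ∑ p ∈ range K ×ˢ range L,
        (224 * ε * 4 ^ (p.1 + p.2) + 7 * 4 ^ min p.1 p.2) * (X / 2 ^ p.1 * (Y / 2 ^ p.2)) ≤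
      X * Y * (224 * ε * 2 ^ K * 2 ^ L + 21 * K) := by
  have hterm : ∀ i j : ℕ, (224 * ε * 4 ^ (i + j) + 7 * 4 ^ min i j) * (X / 2 ^ i * (Y / 2 ^ j)) =
      X * Y * (224 * ε * (2 ^ i * 2 ^ j) + 7 * ((4 : ℝ) ^ min i j / (2 ^ i * 2 ^ j))) := by
    intro i j
    have h4 : (4 : ℝ) ^ (i + j) = (2 ^ i * 2 ^ j) * (2 ^ i * 2 ^ j) := by
      rw [show (4 : ℝ) = 2 * 2 by norm_num, mul_pow, pow_add]
    rw [h4]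
    field_simp
  rw [sum_product]
  simp_rw [hterm, ← mul_sum]
  gcongr
  calc ∑ i ∈ range K, ∑ j ∈ range L,
        (224 * ε * (2 ^ i * 2 ^ j) + 7 * ((4 : ℝ) ^ min i j / (2 ^ i * 2 ^ j)))
      = 224 * ε * ((∑ i ∈ range K, (2 : ℝ) ^ i) * ∑ j ∈ range L, (2 : ℝ) ^ j) +
          ∑ i ∈ range K, 7 * ∑ j ∈ range L, (4 : ℝ) ^ min i j / (2 ^ i * 2 ^ j) := by
        rw [sum_mul_sum]
        simp only [sum_add_distrib, mul_sum]
    _ ≤ 224 * ε * (2 ^ K * 2 ^ L) + ∑ _i ∈ range K, 7 * 3 := by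
        gcongr with i
        · exact sum_range_two_pow_le K
        · exact sum_range_two_pow_le L
        · exact sum_range_four_pow_min_div_le i L
    _ = 224 * ε * 2 ^ K * 2 ^ L + 21 * K := by
        rw [sum_const, card_range, nsmul_eq_mul]
        ring

lemma two_pow_log_floor_succ_le {x : ℝ} (hx : 1 ≤ x) :
    (2 : ℝ) ^ (Nat.log 2 ⌊2 * x⌋₊ + 1) ≤ 4 * x := by
  have hfloor : ⌊2 * x⌋₊ ≠ 0 := (Nat.floor_pos.2 (by linarith)).ne'
  have h : ((2 ^ Nat.log 2 ⌊2 * x⌋₊ : ℕ) : ℝ) ≤ ⌊2 * x⌋₊ := by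
    exact_mod_cast Nat.pow_log_le_self 2 hfloor
  push_cast at h
  rw [pow_succ]
  linarith [Nat.floor_le (by linarith : (0 : ℝ) ≤ 2 * x)]

lemma natLog_floor_succ_le_log {x y : ℝ} (hx : 1 ≤ x) (hy : 1 ≤ y) :
    ((Nat.log 2 ⌊2 * x⌋₊ + 1 : ℕ) : ℝ) ≤ 3 * Real.log (2 * x * y) := by
  have h : ((Nat.log 2 ⌊2 * x⌋₊ + 1 : ℕ) : ℝ) * Real.log 2 ≤ 2 * Real.log (2 * x * y) := by
    rw [← Real.log_pow, ← Real.log_rpow (by positivity), Real.rpow_two]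
    exact Real.log_le_log (by positivity)
      ((two_pow_log_floor_succ_le hx).trans (by nlinarith [one_le_mul_of_one_le_of_one_le hx hy]))
  have hlog : 0 ≤ Real.log (2 * x * y) := Real.log_nonneg (by nlinarith)
  nlinarith [Real.log_two_gt_d9]

lemma natCast_floor_div_le {x : ℝ} (hx : 0 ≤ x) {d : ℕ} (hd : d ≠ 0) :
    ((⌊x⌋₊ / d : ℕ) : ℝ) ≤ x / 2 ^ Nat.log 2 d :=
  calc ((⌊x⌋₊ / d : ℕ) : ℝ) ≤ ((⌊x⌋₊ / 2 ^ Nat.log 2 d : ℕ) : ℝ) := by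
        exact_mod_cast Nat.div_le_div_left (Nat.pow_log_le_self 2 hd) (by positivity)
    _ ≤ x / 2 ^ Nat.log 2 d := by
        refine Nat.cast_div_le.trans ?_
        push_cast
        gcongr
        exact Nat.floor_le hx

lemma Rat.den_natCast_div_dvd (a b : ℕ) : ((a : ℚ) / b).den ∣ b := by
  have h := Rat.den_dvd a b
  rw [Rat.divInt_eq_div] at h
  push_cast at h
  exact_mod_cast h

lemma mem_Ioc_floor_iff {x : ℝ} (hx : 0 ≤ x) {n : ℕ} :
    n ∈ Ioc ⌊x⌋₊ ⌊2 * x⌋₊ ↔ (n : ℝ) ∈ Set.Ioc x (2 * x) := by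
  rw [mem_Ioc, Set.mem_Ioc, Nat.floor_lt hx, Nat.le_floor_iff (by positivity)]

lemma div_mem_Icc_of_mem_Ioc {x a b : ℝ} (ha : a ∈ Set.Ioc x (2 * x)) (hb : b ∈ Set.Ioc x (2 * x)) :
    a / b ∈ Set.Icc (1 / 2) 2 := by
  obtain ⟨ha₁, ha₂⟩ := ha
  obtain ⟨hb₁, hb₂⟩ := hb
  have hx : 0 < x := by linarith
  have hb0 : 0 < b := by linarith
  constructor
  · rw [le_div_iff₀ hb0]; linarith
  · rw [div_le_iff₀ hb0]; linarith

lemma abs_div_sub_div_rpow_le {α H N Δ a b c d : ℝ} (hα : 0 ≤ α) (hH : 0 < H) (hN : 0 < N)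
    (hb : H ≤ b) (hc : N ≤ c) (hd : 0 ≤ d) (h : |a * c ^ α - b * d ^ α| ≤ Δ) :
    |a / b - (d / c) ^ α| ≤ Δ / (H * N ^ α) := by
  have hb0 : 0 < b := hH.trans_le hb
  have hcα : 0 < c ^ α := Real.rpow_pos_of_pos (hN.trans_le hc) α
  have hbc : 0 < b * c ^ α := by positivity
  have e : a / b - (d / c) ^ α = (a * c ^ α - b * d ^ α) / (b * c ^ α) := by
    rw [Real.div_rpow hd (hN.trans_le hc).le]
    field_simp
  rw [e, abs_div, abs_of_pos hbc]
  calc |a * c ^ α - b * d ^ α| / (b * c ^ α) ≤ Δ / (b * c ^ α) := by gcongr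
    _ ≤ Δ / (H * N ^ α) := by
      gcongr
      exact (abs_nonneg _).trans h

def IsCloseRatioPair (α ε : ℝ) (t : ℚ × ℚ) : Prop :=
  (t.1 : ℝ) ∈ Set.Icc (1 / 2) 2 ∧ (t.2 : ℝ) ∈ Set.Icc (1 / 2) 2 ∧ |(t.1 : ℝ) - (t.2 : ℝ) ^ α| ≤ ε

lemma abs_sub_le_of_mem_Icc_half_two {x y : ℝ} (hx : x ∈ Set.Icc (1 / 2 : ℝ) 2)
    (hy : y ∈ Set.Icc (1 / 2 : ℝ) 2) : |x - y| ≤ 3 / 2 := by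
  rw [abs_sub_le_iff]
  constructor <;> linarith [hx.1, hx.2, hy.1, hy.2]

lemma abs_rpow_sub_rpow_le_of_isCloseRatioPair {α ε : ℝ} {t t' : ℚ × ℚ}
    (ht : IsCloseRatioPair α ε t) (ht' : IsCloseRatioPair α ε t') (h : t.1 = t'.1) :
    |(t.2 : ℝ) ^ α - (t'.2 : ℝ) ^ α| ≤ 2 * ε := by
  have h₁ := ht.2.2
  have h₂ := ht'.2.2
  rw [← h] at h₂
  calc |(t.2 : ℝ) ^ α - (t'.2 : ℝ) ^ α|
      ≤ |(t.2 : ℝ) ^ α - t.1| + |(t.1 : ℝ) - (t'.2 : ℝ) ^ α| := abs_sub_le _ _ _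
    _ ≤ 2 * ε := by rw [abs_sub_comm]; linarith

lemma card_le_of_isCloseRatioPair {P : Finset (ℚ × ℚ)} {α ε : ℝ} {i j : ℕ} (hα : 1 / 2 ≤ α)
    (hα1 : α ≤ 1) (hε : 0 ≤ ε)
    (hP : ∀ t ∈ P, IsCloseRatioPair α ε t ∧ t.1.den ≤ 2 ^ (i + 1) ∧ t.2.den ≤ 2 ^ (j + 1)) :
    (#P : ℝ) ≤ 224 * ε * 4 ^ (i + j) + 7 * 4 ^ min i j := by
  -- Fibre over `r` (its `s` are `8ε`-close) or over `s` (its `r` are `2ε`-close): the fibration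
  -- over the smaller denominators gives the `4 ^ min i j`.
  have hfst := card_le_of_den_le_of_diam_le P (L₁ := 3 / 2) (L₂ := 8 * ε) (by positivity)
    (by positivity) (by norm_num) (by positivity) (fun t ht => (hP t ht).2)
    (fun t ht t' ht' => abs_sub_le_of_mem_Icc_half_two (hP t ht).1.1 (hP t' ht').1.1)
    (fun t ht t' ht' h => by
      obtain ⟨⟨-, hs, -⟩, -⟩ := hP t ht
      obtain ⟨⟨-, hs', -⟩, -⟩ := hP t' ht'
      calc |(t.2 : ℝ) - t'.2| ≤ 4 * |(t.2 : ℝ) ^ α - (t'.2 : ℝ) ^ α| :=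
            abs_sub_le_four_mul_abs_rpow_sub_rpow hα hα1 ⟨by linarith [hs.1], hs.2⟩
              ⟨by linarith [hs'.1], hs'.2⟩
        _ ≤ 8 * ε := by
            linarith [abs_rpow_sub_rpow_le_of_isCloseRatioPair (hP t ht).1 (hP t' ht').1 h])
  have hsnd := card_le_of_den_le_of_diam_le (P.image Prod.swap) (L₁ := 3 / 2) (L₂ := 2 * ε)
    (A := 2 ^ (j + 1)) (B := 2 ^ (i + 1)) (by positivity) (by positivity) (by norm_num)
    (by positivity) (forall_mem_image.2 fun t ht => (hP t ht).2.symm)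
    (forall_mem_image.2 fun t ht => forall_mem_image.2 fun t' ht' =>
      abs_sub_le_of_mem_Icc_half_two (hP t ht).1.2.1 (hP t' ht').1.2.1)
    (forall_mem_image.2 fun t ht => forall_mem_image.2 fun t' ht' h => by
      have h₁ := (hP t ht).1.2.2
      have h₂ := (hP t' ht').1.2.2
      rw [Prod.fst_swap, Prod.fst_swap] at h
      rw [← h] at h₂
      calc |(t.1 : ℝ) - t'.1| ≤ |(t.1 : ℝ) - (t.2 : ℝ) ^ α| + |(t.2 : ℝ) ^ α - t'.1| :=
            abs_sub_le _ _ _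
        _ ≤ 2 * ε := by rw [abs_sub_comm ((t.2 : ℝ) ^ α)]; linarith)
  rw [card_image_of_injective _ Prod.swap_injective] at hsnd
  have hsq : ∀ k : ℕ, (((2 ^ (k + 1) : ℕ) : ℝ)) ^ 2 = 4 * 4 ^ k := fun k => by
    push_cast
    rw [← pow_mul, mul_comm, pow_mul]
    norm_num [pow_succ]
    ring
  rw [hsq, hsq] at hfst hsnd
  have h4i : (1 : ℝ) ≤ 4 ^ i := one_le_pow₀ (by norm_num)
  have h4j : (1 : ℝ) ≤ 4 ^ j := one_le_pow₀ (by norm_num)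
  rw [pow_add]
  rcases le_total i j with hij | hij
  · rw [min_eq_left hij]
    nlinarith [mul_nonneg (sub_nonneg.2 h4i) (by positivity : (0 : ℝ) ≤ 32 * ε * 4 ^ j + 1),
      mul_nonneg (mul_nonneg hε (sub_nonneg.2 h4i)) (by positivity : (0 : ℝ) ≤ 4 ^ j)]
  · rw [min_eq_right hij]
    nlinarith [mul_nonneg (sub_nonneg.2 h4j) (by positivity : (0 : ℝ) ≤ 8 * ε * 4 ^ i + 1),
      mul_nonneg (mul_nonneg hε (sub_nonneg.2 h4j)) (by positivity : (0 : ℝ) ≤ 4 ^ i)]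

def ratioPair (q : ℕ × ℕ × ℕ × ℕ) : ℚ × ℚ := ((q.1 : ℚ) / q.2.1, (q.2.2.2 : ℚ) / q.2.2.1)

lemma card_filter_ratioPair_eq_le (Q : Finset (ℕ × ℕ × ℕ × ℕ)) {m n : ℕ}
    (hQ : ∀ q ∈ Q, q.2.1 ∈ Ioc 0 m ∧ q.2.2.1 ∈ Ioc 0 n) (t : ℚ × ℚ) :
    #{q ∈ Q | ratioPair q = t} ≤ (m / t.1.den) * (n / t.2.den) := by
  -- a quadruple over `t` is determined by `(h₂, n₁)`, multiples of `t.1.den` and `t.2.den`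
  rw [← Nat.Ioc_filter_dvd_card_eq_div, ← Nat.Ioc_filter_dvd_card_eq_div, ← card_product]
  refine card_le_card_of_injOn (fun q => (q.2.1, q.2.2.1)) ?_ ?_
  · simp only [coe_filter, Set.MapsTo, Set.mem_ofPred_eq, mem_coe, mem_product, mem_filter, and_imp]
    rintro q hq rfl
    exact ⟨⟨(hQ q hq).1, Rat.den_natCast_div_dvd _ _⟩, ⟨(hQ q hq).2, Rat.den_natCast_div_dvd _ _⟩⟩
  · simp only [coe_filter, Set.InjOn, Set.mem_ofPred_eq, Prod.mk.injEq, and_imp]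
    rintro q hq rfl q' hq' h hb hc
    simp only [ratioPair, Prod.mk.injEq] at h
    have hb0 : (q'.2.1 : ℚ) ≠ 0 := by exact_mod_cast (mem_Ioc.1 (hQ q' hq').1).1.ne'
    have hc0 : (q'.2.2.1 : ℚ) ≠ 0 := by exact_mod_cast (mem_Ioc.1 (hQ q' hq').2).1.ne'
    rw [hb, hc] at h
    have ha : q'.1 = q.1 := by exact_mod_cast (div_left_inj' hb0).1 h.1
    have hd : q'.2.2.2 = q.2.2.2 := by exact_mod_cast (div_left_inj' hc0).1 h.2
    exact Prod.ext ha.symm (Prod.ext hb (Prod.ext hc hd.symm))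

noncomputable def spacingSet (α H N Δ : ℝ) : Finset (ℕ × ℕ × ℕ × ℕ) :=
  (Ioc ⌊H⌋₊ ⌊2 * H⌋₊ ×ˢ Ioc ⌊H⌋₊ ⌊2 * H⌋₊ ×ˢ Ioc ⌊N⌋₊ ⌊2 * N⌋₊ ×ˢ Ioc ⌊N⌋₊ ⌊2 * N⌋₊).filter
    fun q => |(q.1 : ℝ) * (q.2.2.1 : ℝ) ^ α - (q.2.1 : ℝ) * (q.2.2.2 : ℝ) ^ α| ≤ Δ

lemma mem_spacingSet {α H N Δ : ℝ} (hH : 0 ≤ H) (hN : 0 ≤ N) {q : ℕ × ℕ × ℕ × ℕ} :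
    q ∈ spacingSet α H N Δ ↔ (q.1 : ℝ) ∈ Set.Ioc H (2 * H) ∧ (q.2.1 : ℝ) ∈ Set.Ioc H (2 * H) ∧
      (q.2.2.1 : ℝ) ∈ Set.Ioc N (2 * N) ∧ (q.2.2.2 : ℝ) ∈ Set.Ioc N (2 * N) ∧
      |(q.1 : ℝ) * (q.2.2.1 : ℝ) ^ α - (q.2.1 : ℝ) * (q.2.2.2 : ℝ) ^ α| ≤ Δ := by
  simp only [spacingSet, mem_filter, mem_product, mem_Ioc_floor_iff hH, mem_Ioc_floor_iff hN,
    and_assoc]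

lemma mem_Ioc_zero_of_mem_spacingSet {α H N Δ : ℝ} {q : ℕ × ℕ × ℕ × ℕ}
    (hq : q ∈ spacingSet α H N Δ) : q.2.1 ∈ Ioc 0 ⌊2 * H⌋₊ ∧ q.2.2.1 ∈ Ioc 0 ⌊2 * N⌋₊ := by
  simp only [spacingSet, mem_filter, mem_product, mem_Ioc] at hq ⊢
  omega

def dyadicLevel (t : ℚ × ℚ) : ℕ × ℕ := (Nat.log 2 t.1.den, Nat.log 2 t.2.den)

lemma isCloseRatioPair_ratioPair {α H N Δ : ℝ} (hα : 0 ≤ α) (hH : 0 < H) (hN : 0 < N)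
    {q : ℕ × ℕ × ℕ × ℕ} (hq : q ∈ spacingSet α H N Δ) :
    IsCloseRatioPair α (Δ / (H * N ^ α)) (ratioPair q) := by
  obtain ⟨h₁, h₂, n₁, n₂, hclose⟩ := (mem_spacingSet hH.le hN.le).1 hq
  simp only [IsCloseRatioPair, ratioPair, Rat.cast_div, Rat.cast_natCast]
  exact ⟨div_mem_Icc_of_mem_Ioc h₁ h₂, div_mem_Icc_of_mem_Ioc n₂ n₁,
    abs_div_sub_div_rpow_le hα hH hN h₂.1.le n₁.1.le (Nat.cast_nonneg _) hclose⟩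

lemma card_spacingSet_le_sum {α H N Δ : ℝ} (hH : 0 ≤ H) (hN : 0 ≤ N) :
    (#(spacingSet α H N Δ) : ℝ) ≤
      ∑ p ∈ range (Nat.log 2 ⌊2 * H⌋₊ + 1) ×ˢ range (Nat.log 2 ⌊2 * N⌋₊ + 1),
        (#{t ∈ (spacingSet α H N Δ).image ratioPair | dyadicLevel t = p} : ℝ) *
          (2 * H / 2 ^ p.1 * (2 * N / 2 ^ p.2)) := by
  set Q := spacingSet α H N Δ
  set W : ℕ × ℕ → ℝ := fun p => 2 * H / 2 ^ p.1 * (2 * N / 2 ^ p.2)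
  have hQ : ∀ q ∈ Q, q.2.1 ∈ Ioc 0 ⌊2 * H⌋₊ ∧ q.2.2.1 ∈ Ioc 0 ⌊2 * N⌋₊ :=
    fun q hq => mem_Ioc_zero_of_mem_spacingSet hq
  have hmaps : ∀ t ∈ Q.image ratioPair, dyadicLevel t ∈
      range (Nat.log 2 ⌊2 * H⌋₊ + 1) ×ˢ range (Nat.log 2 ⌊2 * N⌋₊ + 1) := by
    simp only [forall_mem_image, mem_product, mem_range, Nat.lt_succ_iff, dyadicLevel]
    intro q hq
    obtain ⟨⟨hb, hb'⟩, ⟨hc, hc'⟩⟩ := mem_Ioc.1 (hQ q hq).1, mem_Ioc.1 (hQ q hq).2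
    exact ⟨Nat.log_mono_right ((Nat.le_of_dvd hb (Rat.den_natCast_div_dvd _ _)).trans hb'),
      Nat.log_mono_right ((Nat.le_of_dvd hc (Rat.den_natCast_div_dvd _ _)).trans hc')⟩
  calc (#Q : ℝ) = ∑ t ∈ Q.image ratioPair, (#{q ∈ Q | ratioPair q = t} : ℝ) := by
        exact_mod_cast card_eq_sum_card_fiberwise fun q hq => mem_image_of_mem ratioPair hq
    _ ≤ ∑ t ∈ Q.image ratioPair, W (dyadicLevel t) := by
        gcongr with t
        calc (#{q ∈ Q | ratioPair q = t} : ℝ)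
            ≤ ((⌊2 * H⌋₊ / t.1.den * (⌊2 * N⌋₊ / t.2.den) : ℕ) : ℝ) := by
              exact_mod_cast card_filter_ratioPair_eq_le Q hQ t
          _ ≤ W (dyadicLevel t) := by
              rw [Nat.cast_mul]
              exact mul_le_mul (natCast_floor_div_le (by positivity) t.1.den_nz)
                (natCast_floor_div_le (by positivity) t.2.den_nz) (by positivity) (by positivity)
    _ = ∑ p ∈ range (Nat.log 2 ⌊2 * H⌋₊ + 1) ×ˢ range (Nat.log 2 ⌊2 * N⌋₊ + 1),
          ∑ t ∈ Q.image ratioPair with dyadicLevel t = p, W (dyadicLevel t) :=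
        (sum_fiberwise_of_maps_to hmaps _).symm
    _ = _ := by
        refine sum_congr rfl fun p _ => ?_
        rw [sum_congr rfl fun t ht => congrArg W (mem_filter.1 ht).2, sum_const, nsmul_eq_mul]

lemma card_filter_dyadicLevel_eq_le {α H N Δ : ℝ} (hα : 1 / 2 ≤ α) (hα1 : α ≤ 1) (hH : 0 < H)
    (hN : 0 < N) (hΔ : 0 ≤ Δ) (p : ℕ × ℕ) :
    (#{t ∈ (spacingSet α H N Δ).image ratioPair | dyadicLevel t = p} : ℝ) ≤
      224 * (Δ / (H * N ^ α)) * 4 ^ (p.1 + p.2) + 7 * 4 ^ min p.1 p.2 := by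
  refine card_le_of_isCloseRatioPair hα hα1 (by positivity) fun t ht => ?_
  obtain ⟨htT, rfl⟩ := mem_filter.1 ht
  obtain ⟨q, hq, rfl⟩ := mem_image.1 htT
  exact ⟨isCloseRatioPair_ratioPair (by linarith) hH hN hq,
    (Nat.lt_pow_succ_log_self one_lt_two _).le, (Nat.lt_pow_succ_log_self one_lt_two _).le⟩

lemma card_spacingSet_le {α H N Δ : ℝ} (hα : 1 / 2 ≤ α) (hα1 : α ≤ 1) (hH : 0 < H)
    (hN : 0 < N) (hΔ : 0 ≤ Δ) :
    (#(spacingSet α H N Δ) : ℝ) ≤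
      2 * H * (2 * N) * (224 * (Δ / (H * N ^ α)) * 2 ^ (Nat.log 2 ⌊2 * H⌋₊ + 1) *
        2 ^ (Nat.log 2 ⌊2 * N⌋₊ + 1) + 21 * ((Nat.log 2 ⌊2 * H⌋₊ + 1 : ℕ) : ℝ)) := by
  refine (card_spacingSet_le_sum hH.le hN.le).trans <| le_trans (sum_le_sum fun p _ => ?_)
    (sum_dyadic_blocks_le _ _ (by positivity) (by positivity) (by positivity))
  gcongr
  exact card_filter_dyadicLevel_eq_le hα hα1 hH hN hΔ p

theorem spacing_lemma :
    ∃ C > (0 : ℝ), ∀ (α H N Δ : ℝ), 1 / 2 < α → α < 1 → 1 ≤ H → 1 ≤ N → 0 < Δ →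
      (((Finset.Ioc ⌊H⌋₊ ⌊2 * H⌋₊ ×ˢ Finset.Ioc ⌊H⌋₊ ⌊2 * H⌋₊ ×ˢ
          Finset.Ioc ⌊N⌋₊ ⌊2 * N⌋₊ ×ˢ Finset.Ioc ⌊N⌋₊ ⌊2 * N⌋₊).filter
        (fun q : ℕ × ℕ × ℕ × ℕ =>
          |(q.1 : ℝ) * (q.2.2.1 : ℝ) ^ α - (q.2.1 : ℝ) * (q.2.2.2 : ℝ) ^ α| ≤ Δ)).card : ℝ) ≤
      C * (H * N * Real.log (2 * H * N) + Δ * H * N ^ (2 - α)) := by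
  refine ⟨14336, by norm_num, fun α H N Δ hα hα1 hH hN hΔ => ?_⟩
  have hH0 : 0 < H := by linarith
  have hN0 : 0 < N := by linarith
  have hε : Δ / (H * N ^ α) * (4 * H) * (4 * N) * (H * N) = 16 * (Δ * H * N ^ (2 - α)) := by
    rw [Real.rpow_sub hN0, Real.rpow_two]
    field_simp
    ring
  have hlog : 0 ≤ H * N * Real.log (2 * H * N) :=
    mul_nonneg (by positivity) (Real.log_nonneg (by nlinarith))
  calc (#(spacingSet α H N Δ) : ℝ)
      ≤ 2 * H * (2 * N) * (224 * (Δ / (H * N ^ α)) * 2 ^ (Nat.log 2 ⌊2 * H⌋₊ + 1) *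
          2 ^ (Nat.log 2 ⌊2 * N⌋₊ + 1) + 21 * ((Nat.log 2 ⌊2 * H⌋₊ + 1 : ℕ) : ℝ)) :=
        card_spacingSet_le hα.le hα1.le hH0 hN0 hΔ.le
    _ ≤ 2 * H * (2 * N) *
          (224 * (Δ / (H * N ^ α)) * (4 * H) * (4 * N) + 21 * (3 * Real.log (2 * H * N))) := by
        gcongr
        · exact two_pow_log_floor_succ_le hH
        · exact two_pow_log_floor_succ_le hN
        · exact natLog_floor_succ_le_log hH hN
    _ ≤ 14336 * (H * N * Real.log (2 * H * N) + Δ * H * N ^ (2 - α)) := by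
        nlinarith
end

section
/- Let z ≥ 1 be a real number and k ≥ 1 an integer. Then for every positive integer n ≤ 2z^k, Λ(n) = Σ_{j=1}^{k} (−1)^{j−1} binom(k, j) Σ (log n₁) μ(n_{j+1}) ⋯ μ(n_{2j}), where the inner sum runs over all ordered 2j-tuples (n₁, …, n_{2j}) of positive integers with n₁ n₂ ⋯ n_{2j} = n and n_i ≤ z for every i with j+1 ≤ i ≤ 2j. -/
/-!
Write `μ_z` for the Möbius function truncated to arguments `≤ z`. Since `ζ * μ = 1`, the
function `1 - ζ * μ_z` vanishes on `[1, z]`, so its `k`-th Dirichlet power vanishes on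
`[1, z^k]`, and `Λ * (1 - ζ * μ_z)^k` vanishes on `[1, 2 z^k]` because `Λ 1 = 0`. Hence there
`Λ = Λ * (1 - (1 - ζ * μ_z)^k)`; expanding binomially and using `Λ * ζ = log`, the `j`-th term
becomes `log * ζ^(j-1) * μ_z^j`, whose value at `n` is the sum over `2j`-tuples.
-/

open ArithmeticFunction Finset
open scoped ArithmeticFunction.zeta ArithmeticFunction.Moebius

theorem Nat.finMulAntidiag_eq_filter_piFinset_Icc (d n : ℕ) :
    Nat.finMulAntidiag d n =
      (Fintype.piFinset fun _ : Fin d => Icc 1 n).filter (fun f => ∏ i, f i = n) := by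
  ext f
  simp only [Nat.mem_finMulAntidiag, mem_filter, Fintype.mem_piFinset, mem_Icc]
  constructor
  · rintro ⟨hprod, hn⟩
    have hf : f ∈ Nat.finMulAntidiag d n := Nat.mem_finMulAntidiag.mpr ⟨hprod, hn⟩
    refine ⟨fun i => ⟨?_, ?_⟩, hprod⟩
    · exact Nat.one_le_iff_ne_zero.mpr (Nat.ne_zero_of_mem_finMulAntidiag hf i)
    · exact Nat.le_of_dvd (Nat.pos_of_ne_zero hn) (Nat.dvd_of_mem_finMulAntidiag hf i)
  · rintro ⟨hf, hprod⟩
    refine ⟨hprod, hprod ▸ prod_ne_zero_iff.mpr fun i _ => ?_⟩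
    exact Nat.one_le_iff_ne_zero.mp (hf i).1

theorem one_sub_one_sub_pow {A : Type*} [CommRing A] (x : A) (k : ℕ) :
    1 - (1 - x) ^ k = ∑ j ∈ range k, ((-1) ^ j * k.choose (j + 1) : ℤ) • x ^ (j + 1) := by
  rw [show 1 - x = -x + 1 by ring, add_pow, sum_range_succ']
  simp only [one_pow, mul_one, pow_zero, Nat.choose_zero_right, Nat.cast_one, sub_add_cancel_right,
    ← sum_neg_distrib]
  refine sum_congr rfl fun j _ => ?_
  rw [neg_pow, zsmul_eq_mul]
  push_cast
  ring

namespace ArithmeticFunction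

variable {R : Type*}

def applyAddMonoidHom [AddCommMonoid R] (n : ℕ) : ArithmeticFunction R →+ R where
  toFun f := f n
  map_zero' := rfl
  map_add' _ _ := rfl

theorem sum_apply {ι : Type*} [AddCommMonoid R] (s : Finset ι) (f : ι → ArithmeticFunction R)
    (n : ℕ) : (∑ i ∈ s, f i) n = ∑ i ∈ s, f i n :=
  map_sum (applyAddMonoidHom n) f s

theorem sub_apply [AddCommGroup R] (f g : ArithmeticFunction R) (n : ℕ) :
    (f - g) n = f n - g n :=
  map_sub (applyAddMonoidHom n) f g

theorem zsmul_apply [AddCommGroup R] (c : ℤ) (f : ArithmeticFunction R) (n : ℕ) :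
    (c • f) n = c • f n :=
  map_zsmul (applyAddMonoidHom n) c f

theorem prod_apply [CommSemiring R] {m : ℕ} (g : Fin m → ArithmeticFunction R) (n : ℕ) :
    (∏ i, g i) n = ∑ f ∈ Nat.finMulAntidiag m n, ∏ i, g i (f i) := by
  induction m generalizing n with
  | zero =>
    by_cases hn : n = 1
    · simp [hn, Nat.finMulAntidiag_one]
    · simp [hn, Nat.finMulAntidiag_zero_left hn]
  | succ m ih =>
    rw [Fin.prod_univ_succ, mul_apply]
    simp_rw [ih, mul_sum]
    rw [sum_sigma']
    refine sum_nbij' (fun x => Fin.cons x.1.1 x.2)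
      (fun f : Fin (m + 1) → ℕ => ⟨(f 0, ∏ i : Fin m, f i.succ), Fin.tail f⟩) ?_ ?_ ?_ ?_ ?_
    · rintro ⟨⟨a, b⟩, f⟩ h
      simp_all [Fin.prod_univ_succ]
    · intro f hf
      obtain ⟨hprod, hn⟩ := Nat.mem_finMulAntidiag.mp hf
      rw [Fin.prod_univ_succ] at hprod
      have : ∏ i : Fin m, f i.succ ≠ 0 := right_ne_zero_of_mul (hprod ▸ hn)
      simp_all [Fin.tail]
    · rintro ⟨⟨a, b⟩, f⟩ h
      simp_all
    · intro f _
      simp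
    · intro x _
      simp [Fin.prod_univ_succ]

theorem mul_apply_eq_zero_of_le_two_mul [Semiring R] {f g : ArithmeticFunction R} (hf : f 1 = 0)
    {y : ℝ} (hg : ∀ m : ℕ, (m : ℝ) ≤ y → g m = 0) {n : ℕ} (hn : (n : ℝ) ≤ 2 * y) :
    (f * g) n = 0 := by
  rw [mul_apply]
  refine sum_eq_zero fun ⟨a, b⟩ hab => ?_
  obtain ⟨hab, -⟩ := Nat.mem_divisorsAntidiagonal.mp hab
  by_cases hb : (b : ℝ) ≤ y
  · rw [hg b hb, mul_zero]
  match a with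
  | 0 => rw [map_zero, zero_mul]
  | 1 => rw [hf, zero_mul]
  | a + 2 =>
    have : ((a + 2 : ℕ) : ℝ) * b = n := by exact_mod_cast hab
    push_cast at this
    nlinarith

theorem pow_apply_eq_zero_of_le [Semiring R] {f : ArithmeticFunction R} {z : ℝ} (hz : 0 ≤ z)
    (hf : ∀ m : ℕ, (m : ℝ) ≤ z → f m = 0) {k : ℕ} (hk : 1 ≤ k) {n : ℕ} (hn : (n : ℝ) ≤ z ^ k) :
    (f ^ k) n = 0 := by
  induction k, hk using Nat.le_induction generalizing n with
  | base => rw [pow_one]; exact hf n (by simpa using hn)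
  | succ k hk ih =>
    rw [pow_succ, mul_apply]
    refine sum_eq_zero fun ⟨a, b⟩ hab => ?_
    obtain ⟨hab, -⟩ := Nat.mem_divisorsAntidiagonal.mp hab
    by_cases ha : (a : ℝ) ≤ z ^ k
    · rw [ih ha, zero_mul]
    · have hab : (a : ℝ) * b = n := by exact_mod_cast hab
      have hb : (b : ℝ) ≤ z := by
        by_contra hb
        have hzk := pow_nonneg hz k
        rw [pow_succ] at hn
        nlinarith
      rw [hf b hb, mul_zero]

noncomputable def truncLE [Zero R] (f : ArithmeticFunction R) (z : ℝ) : ArithmeticFunction R :=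
  ⟨fun m => if (m : ℝ) ≤ z then f m else 0, by simp⟩

theorem truncLE_apply [Zero R] (f : ArithmeticFunction R) (z : ℝ) (m : ℕ) :
    f.truncLE z m = if (m : ℝ) ≤ z then f m else 0 :=
  rfl

theorem mul_truncLE_apply_of_le [Semiring R] (f g : ArithmeticFunction R) {z : ℝ} {m : ℕ}
    (hm : (m : ℝ) ≤ z) : (f * g.truncLE z) m = (f * g) m := by
  simp only [mul_apply]
  refine sum_congr rfl fun p hp => ?_
  have hp : (p.2 : ℝ) ≤ m := by
    exact_mod_cast Nat.divisor_le (Nat.snd_mem_divisors_of_mem_antidiagonal hp)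
  rw [truncLE_apply, if_pos (hp.trans hm)]

theorem one_sub_zeta_mul_truncLE_moebius_apply [Ring R] {z : ℝ} {m : ℕ} (hm : (m : ℝ) ≤ z) :
    (1 - ζ * (μ : ArithmeticFunction R).truncLE z) m = 0 := by
  rw [sub_apply, mul_truncLE_apply_of_le _ _ hm, coe_zeta_mul_coe_moebius, sub_self]

end ArithmeticFunction

namespace HeathBrown

-- Indexed by `ℕ` rather than `Fin (2 * (j + 1))` so that products split along `Finset.range`.
noncomputable def factor (z : ℝ) (j i : ℕ) : ArithmeticFunction ℝ :=
  if i = 0 then log else if i ≤ j then ζ else (μ : ArithmeticFunction ℝ).truncLE z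

theorem prod_factor (z : ℝ) (j : ℕ) :
    ∏ i : Fin (2 * (j + 1)), factor z j i =
      Λ * (ζ * (μ : ArithmeticFunction ℝ).truncLE z) ^ (j + 1) := by
  have hζ : ∀ i ∈ range j, factor z j (i + 1) = ζ := fun i hi => by
    simp [factor, Nat.succ_le_of_lt (mem_range.mp hi)]
  have hμ : ∀ i ∈ range (j + 1), factor z j (j + 1 + i) = (μ : ArithmeticFunction ℝ).truncLE z :=
    fun i _ => by simp [factor, show ¬ j + 1 + i ≤ j by omega]
  rw [Fin.prod_univ_eq_prod_range (factor z j), two_mul, prod_range_add, prod_range_succ',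
    prod_congr rfl hζ, prod_congr rfl hμ, prod_const, prod_const, card_range, card_range, factor,
    if_pos rfl, ← vonMangoldt_mul_zeta]
  ring

theorem prod_factor_apply (z : ℝ) (j : ℕ) {f : Fin (2 * (j + 1)) → ℕ} (hf : ∀ i, f i ≠ 0) :
    ∏ i : Fin (2 * (j + 1)), factor z j i (f i) =
      if ∀ i : Fin (2 * (j + 1)), j + 1 ≤ (i : ℕ) → (f i : ℝ) ≤ z then
        Real.log (f ⟨0, by omega⟩) *
          ∏ i ∈ univ.filter (fun i : Fin (2 * (j + 1)) => j + 1 ≤ (i : ℕ)), ((μ (f i) : ℤ) : ℝ)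
      else 0 := by
  rw [← prod_filter_not_mul_prod_filter univ (fun i : Fin (2 * (j + 1)) => j + 1 ≤ (i : ℕ))]
  have hlog : ∏ i ∈ univ.filter (fun i : Fin (2 * (j + 1)) => ¬ j + 1 ≤ (i : ℕ)),
      factor z j i (f i) = Real.log (f ⟨0, by omega⟩) := by
    rw [prod_eq_single_of_mem ⟨0, by omega⟩ (by simp) fun i hi hi0 => ?_]
    · simp [factor, log_apply]
    have hi0 : (i : ℕ) ≠ 0 := fun h => hi0 (Fin.ext h)
    simp only [mem_filter, mem_univ, true_and, not_le] at hi
    simp [factor, hi0, Nat.le_of_lt_succ hi, hf i]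
  have hμ : ∀ i ∈ univ.filter (fun i : Fin (2 * (j + 1)) => j + 1 ≤ (i : ℕ)),
      factor z j i (f i) = if (f i : ℝ) ≤ z then ((μ (f i) : ℤ) : ℝ) else 0 := fun i hi => by
    simp only [mem_filter, mem_univ, true_and] at hi
    simp [factor, show (i : ℕ) ≠ 0 by omega, show ¬ (i : ℕ) ≤ j by omega, truncLE_apply]
  rw [hlog, prod_congr rfl hμ, prod_ite_zero]
  simp only [mem_filter, mem_univ, true_and]
  split_ifs <;> ring

theorem vonMangoldt_mul_pow_apply (z : ℝ) (j n : ℕ) :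
    (Λ * (ζ * (μ : ArithmeticFunction ℝ).truncLE z) ^ (j + 1)) n =
      ∑ f ∈ (Fintype.piFinset fun _ : Fin (2 * (j + 1)) => Icc 1 n).filter
          (fun f => (∏ i, f i) = n ∧
            ∀ i : Fin (2 * (j + 1)), j + 1 ≤ (i : ℕ) → (f i : ℝ) ≤ z),
        Real.log (f ⟨0, by omega⟩) *
          ∏ i ∈ univ.filter (fun i : Fin (2 * (j + 1)) => j + 1 ≤ (i : ℕ)),
            ((μ (f i) : ℤ) : ℝ) := by
  rw [← prod_factor, ArithmeticFunction.prod_apply, Nat.finMulAntidiag_eq_filter_piFinset_Icc,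
    ← filter_filter]
  conv_rhs => rw [sum_filter]
  refine sum_congr rfl fun f hf => prod_factor_apply z j fun i => ?_
  simp only [mem_filter, Fintype.mem_piFinset, mem_Icc] at hf
  exact Nat.one_le_iff_ne_zero.mp (hf.1 i).1

end HeathBrown

theorem heath_brown_identity (z : ℝ) (hz : 1 ≤ z) (k : ℕ) (hk : 1 ≤ k)
    (n : ℕ) (hnz : (n : ℝ) ≤ 2 * z ^ k) :
    (ArithmeticFunction.vonMangoldt n : ℝ) =
      ∑ j ∈ Finset.range k, (-1 : ℝ) ^ j * (k.choose (j + 1) : ℝ) *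
        ∑ f ∈ (Fintype.piFinset fun _ : Fin (2 * (j + 1)) => Finset.Icc 1 n).filter
            (fun f => (∏ i, f i) = n ∧
              ∀ i : Fin (2 * (j + 1)), j + 1 ≤ (i : ℕ) → (f i : ℝ) ≤ z),
          Real.log (f ⟨0, by omega⟩) *
            ∏ i ∈ Finset.univ.filter (fun i : Fin (2 * (j + 1)) => j + 1 ≤ (i : ℕ)),
              ((ArithmeticFunction.moebius (f i) : ℤ) : ℝ) := by
  set g := ζ * (μ : ArithmeticFunction ℝ).truncLE z
  have hvanish : (Λ * (1 - g) ^ k) n = 0 :=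
    mul_apply_eq_zero_of_le_two_mul vonMangoldt_apply_one
      (fun _ hm => pow_apply_eq_zero_of_le (by linarith)
        (fun _ => one_sub_zeta_mul_truncLE_moebius_apply) hk hm) hnz
  calc Λ n = (Λ * (1 - (1 - g) ^ k)) n + (Λ * (1 - g) ^ k) n := by
        rw [← ArithmeticFunction.add_apply, ← mul_add, sub_add_cancel, mul_one]
    _ = ∑ j ∈ range k, ((-1) ^ j * k.choose (j + 1) : ℤ) • (Λ * g ^ (j + 1)) n := by
        rw [hvanish, add_zero, one_sub_one_sub_pow, mul_sum, ArithmeticFunction.sum_apply]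
        simp_rw [mul_smul_comm, zsmul_apply]
    _ = _ := by
        refine sum_congr rfl fun j _ => ?_
        rw [HeathBrown.vonMangoldt_mul_pow_apply, zsmul_eq_mul]
        push_cast
        rfl
end

section
/- Let m, n ≥ 1 be integers, and let A_i, a_i (1 ≤ i ≤ m) and B_j, b_j (1 ≤ j ≤ n) be positive reals. Define L(H) = Σ_{i=1}^{m} A_i H^{a_i} + Σ_{j=1}^{n} B_j H^{−b_j} for H > 0. Then there is a constant C = C(m, n), depending only on m and n, such that for all reals 0 < H₁ ≤ H₂ there exists 𝓗 with H₁ ≤ 𝓗 ≤ H₂ and L(𝓗) ≤ C ( Σ_{i=1}^{m} A_i H₁^{a_i} + Σ_{j=1}^{n} B_j H₂^{−b_j} + Σ_{i=1}^{m} Σ_{j=1}^{n} (A_i^{b_j} B_j^{a_i})^{1/(a_i + b_j)} ). -/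
set_option maxHeartbeats 1000000

open Real Finset

theorem graham_kolesnik_optimization (m n : ℕ) (hm : 1 ≤ m) (hn : 1 ≤ n) :
    ∃ C > (0 : ℝ), ∀ (A a : Fin m → ℝ) (B b : Fin n → ℝ),
      (∀ i, 0 < A i) → (∀ i, 0 < a i) → (∀ j, 0 < B j) → (∀ j, 0 < b j) →
      ∀ H₁ H₂ : ℝ, 0 < H₁ → H₁ ≤ H₂ →
      ∃ H : ℝ, H₁ ≤ H ∧ H ≤ H₂ ∧
        (∑ i, A i * H ^ (a i) + ∑ j, B j * H ^ (-(b j))) ≤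
          C * (∑ i, A i * H₁ ^ (a i) + ∑ j, B j * H₂ ^ (-(b j)) +
            ∑ i, ∑ j, ((A i) ^ (b j) * (B j) ^ (a i)) ^ (1 / (a i + b j))) := by
  have hm1 : (1 : ℝ) ≤ m := by exact_mod_cast hm
  have hn1 : (1 : ℝ) ≤ n := by exact_mod_cast hn
  have hCpos : (0 : ℝ) < 2 * m * n := by nlinarith
  have hC2 : (2 : ℝ) ≤ 2 * m * n := by nlinarith
  refine ⟨2 * m * n, hCpos, ?_⟩
  intro A a B b hA ha hB hb H₁ H₂ hH₁ hle
  have hH₂ : 0 < H₂ := lt_of_lt_of_le hH₁ hle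
  set F : ℝ → ℝ := fun H => ∑ i, A i * H ^ (a i) with hF
  set G : ℝ → ℝ := fun H => ∑ j, B j * H ^ (-(b j)) with hG
  have hFnn : ∀ H : ℝ, 0 ≤ H → 0 ≤ F H := fun H hH =>
    Finset.sum_nonneg fun i _ => mul_nonneg (hA i).le (Real.rpow_nonneg hH _)
  have hGnn : ∀ H : ℝ, 0 ≤ H → 0 ≤ G H := fun H hH =>
    Finset.sum_nonneg fun j _ => mul_nonneg (hB j).le (Real.rpow_nonneg hH _)
  have hS3 : 0 ≤ ∑ i, ∑ j, ((A i) ^ (b j) * (B j) ^ (a i)) ^ (1 / (a i + b j)) :=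
    Finset.sum_nonneg fun i _ => Finset.sum_nonneg fun j _ =>
      Real.rpow_nonneg (mul_nonneg (Real.rpow_nonneg (hA i).le _) (Real.rpow_nonneg (hB j).le _)) _
  by_cases h1 : G H₁ ≤ F H₁
  · refine ⟨H₁, le_refl _, hle, ?_⟩
    have h2 : 0 ≤ G H₂ := hGnn H₂ hH₂.le
    have h3 : 0 ≤ F H₁ := hFnn H₁ hH₁.le
    show F H₁ + G H₁ ≤ 2 * m * n * (F H₁ + G H₂ + _)
    nlinarith [mul_nonneg (mul_nonneg (by linarith : (0:ℝ) ≤ 2*m*n) h2) (le_refl (0:ℝ)),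
      mul_le_mul_of_nonneg_right hC2 h3, mul_nonneg hCpos.le h2, mul_nonneg hCpos.le hS3]
  · by_cases h2 : F H₂ ≤ G H₂
    · refine ⟨H₂, hle, le_refl _, ?_⟩
      have h3 : 0 ≤ G H₂ := hGnn H₂ hH₂.le
      have h4 : 0 ≤ F H₁ := hFnn H₁ hH₁.le
      show F H₂ + G H₂ ≤ 2 * m * n * (F H₁ + G H₂ + _)
      nlinarith [mul_le_mul_of_nonneg_right hC2 h3, mul_nonneg hCpos.le h4,
        mul_nonneg hCpos.le hS3]
    · -- crossing case
      push_neg at h1 h2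
      have hcont : ContinuousOn (fun H => F H - G H) (Set.Icc H₁ H₂) := by
        have hpos : ∀ x ∈ Set.Icc H₁ H₂, x ≠ 0 := fun x hx =>
          ne_of_gt (lt_of_lt_of_le hH₁ hx.1)
        have hFc : ContinuousOn F (Set.Icc H₁ H₂) := by
          apply continuousOn_finset_sum
          intro i _
          exact continuousOn_const.mul fun x hx =>
            (Real.continuousAt_rpow_const x (a i) (Or.inl (hpos x hx))).continuousWithinAt
        have hGc : ContinuousOn G (Set.Icc H₁ H₂) := by
          apply continuousOn_finset_sum
          intro j _
          exact continuousOn_const.mul fun x hx =>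
            (Real.continuousAt_rpow_const x (-(b j)) (Or.inl (hpos x hx))).continuousWithinAt
        exact hFc.sub hGc
      have hmem : (0 : ℝ) ∈ Set.Icc (F H₁ - G H₁) (F H₂ - G H₂) :=
        ⟨by linarith, by linarith⟩
      obtain ⟨H₀, hH₀mem, hφ⟩ := intermediate_value_Icc hle hcont hmem
      have hH₀pos : 0 < H₀ := lt_of_lt_of_le hH₁ hH₀mem.1
      have hFG : F H₀ = G H₀ := by linarith [sub_eq_zero.mp hφ]
      set V := F H₀ with hV
      haveI : Nonempty (Fin m) := Fin.pos_iff_nonempty.mp hm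
      haveI : Nonempty (Fin n) := Fin.pos_iff_nonempty.mp hn
      have hVpos : 0 < V :=
        Finset.sum_pos (fun i _ => mul_pos (hA i) (Real.rpow_pos_of_pos hH₀pos _))
          Finset.univ_nonempty
      -- find i with A i * H₀ ^ a i ≥ V / m
      obtain ⟨i, -, hi⟩ : ∃ i ∈ Finset.univ, V / m ≤ A i * H₀ ^ (a i) := by
        apply Finset.exists_le_of_sum_le Finset.univ_nonempty
        rw [Finset.sum_const, Finset.card_univ, Fintype.card_fin, nsmul_eq_mul]
        have hmne : (m : ℝ) ≠ 0 := by linarith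
        rw [mul_div_cancel₀ _ hmne]
      obtain ⟨j, -, hj⟩ : ∃ j ∈ Finset.univ, V / n ≤ B j * H₀ ^ (-(b j)) := by
        apply Finset.exists_le_of_sum_le Finset.univ_nonempty
        rw [Finset.sum_const, Finset.card_univ, Fintype.card_fin, nsmul_eq_mul]
        have hnne : (n : ℝ) ≠ 0 := by linarith
        rw [hFG, mul_div_cancel₀ _ hnne]
      have hVmn : 0 < V / (m * n) := div_pos hVpos (by nlinarith)
      have hiq : V / (m * n) ≤ A i * H₀ ^ (a i) := by
        refine le_trans ?_ hi
        apply div_le_div_of_nonneg_left hVpos.le (by linarith) (by nlinarith)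
      have hjq : V / (m * n) ≤ B j * H₀ ^ (-(b j)) := by
        refine le_trans ?_ hj
        apply div_le_div_of_nonneg_left hVpos.le (by linarith) (by nlinarith)
      have habpos : 0 < a i + b j := by linarith [ha i, hb j]
      have hPQ : (A i * H₀ ^ (a i)) ^ (b j) * (B j * H₀ ^ (-(b j))) ^ (a i)
          = A i ^ (b j) * B j ^ (a i) := by
        rw [Real.mul_rpow (hA i).le (Real.rpow_nonneg hH₀pos.le _),
          Real.mul_rpow (hB j).le (Real.rpow_nonneg hH₀pos.le _),
          ← Real.rpow_mul hH₀pos.le, ← Real.rpow_mul hH₀pos.le]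
        have : H₀ ^ (a i * b j) * H₀ ^ (-(b j) * a i) = 1 := by
          rw [← Real.rpow_add hH₀pos]
          ring_nf
          exact Real.rpow_zero H₀
        calc A i ^ b j * H₀ ^ (a i * b j) * (B j ^ a i * H₀ ^ (-(b j) * a i))
            = A i ^ b j * B j ^ a i * (H₀ ^ (a i * b j) * H₀ ^ (-(b j) * a i)) := by ring
          _ = A i ^ b j * B j ^ a i := by rw [this, mul_one]
      have hpow : (V / (m * n)) ^ (a i + b j) ≤ A i ^ (b j) * B j ^ (a i) := by
        rw [Real.rpow_add hVmn, ← hPQ]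
        have h1 := Real.rpow_le_rpow hVmn.le hjq (ha i).le
        have h2 := Real.rpow_le_rpow hVmn.le hiq (hb j).le
        calc (V / (m * n)) ^ (a i) * (V / (m * n)) ^ (b j)
            ≤ (B j * H₀ ^ (-(b j))) ^ (a i) * (A i * H₀ ^ (a i)) ^ (b j) :=
              mul_le_mul h1 h2 (Real.rpow_nonneg hVmn.le _)
                (Real.rpow_nonneg (mul_nonneg (hB j).le (Real.rpow_nonneg hH₀pos.le _)) _)
          _ = (A i * H₀ ^ (a i)) ^ (b j) * (B j * H₀ ^ (-(b j))) ^ (a i) := by ring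
      have hkey : V / (m * n) ≤ (A i ^ (b j) * B j ^ (a i)) ^ (1 / (a i + b j)) := by
        have := Real.rpow_le_rpow (Real.rpow_nonneg hVmn.le _) hpow
          (le_of_lt (by positivity : (0:ℝ) < 1 / (a i + b j)))
        rwa [← Real.rpow_mul hVmn.le, mul_one_div, div_self (ne_of_gt habpos),
          Real.rpow_one] at this
      have hterm : V / (m * n) ≤ ∑ i, ∑ j, ((A i) ^ (b j) * (B j) ^ (a i)) ^ (1 / (a i + b j)) := by
        refine le_trans hkey ?_
        have hinner : ((A i) ^ (b j) * (B j) ^ (a i)) ^ (1 / (a i + b j)) ≤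
            ∑ j, ((A i) ^ (b j) * (B j) ^ (a i)) ^ (1 / (a i + b j)) :=
          Finset.single_le_sum
            (f := fun j' => ((A i) ^ (b j') * (B j') ^ (a i)) ^ (1 / (a i + b j')))
            (fun j _ => Real.rpow_nonneg
            (mul_nonneg (Real.rpow_nonneg (hA i).le _) (Real.rpow_nonneg (hB j).le _)) _)
            (Finset.mem_univ j)
        refine le_trans hinner ?_
        exact Finset.single_le_sum
          (f := fun i' => ∑ j', ((A i') ^ (b j') * (B j') ^ (a i')) ^ (1 / (a i' + b j')))
          (fun i _ => Finset.sum_nonneg fun j _ =>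
          Real.rpow_nonneg (mul_nonneg (Real.rpow_nonneg (hA i).le _)
            (Real.rpow_nonneg (hB j).le _)) _) (Finset.mem_univ i)
      refine ⟨H₀, hH₀mem.1, hH₀mem.2, ?_⟩
      show F H₀ + G H₀ ≤ 2 * m * n * (F H₁ + G H₂ + _)
      have h4 : 0 ≤ F H₁ := hFnn H₁ hH₁.le
      have h5 : 0 ≤ G H₂ := hGnn H₂ hH₂.le
      have h6 : (m : ℝ) * n * (V / (m * n)) = V := by
        field_simp
      nlinarith [mul_le_mul_of_nonneg_left hterm (le_of_lt hCpos),
        mul_nonneg hCpos.le h4, mul_nonneg hCpos.le h5]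
end

section
/- There is an absolute constant C such that: if N ≥ 1, B ≥ 0, Δ > 0, D ≥ 1, and f : [N, 2N] → ℝ is differentiable with |f(x)| ≤ B and f′(x) ≥ Δ for all x ∈ [N, 2N], then Σ_{N < n ≤ 2N} min( D, 1/‖f(n)‖ ) ≤ C (B + 1)(D + 1/Δ) log(2 + 1/Δ), where n runs over integers. -/
/-!
By the mean value theorem `Δ |p - q| ≤ |f p - f q|` on `[N, 2N]`. Group the integers `n`
according to the integer `m` nearest to `f n`; as `|f| ≤ B` there are at most `2B + 2` groups.
Inside one group `u n := ‖f n‖ = |f n - m|` satisfies `Δ |p - q| ≤ u p + u q`, so measured from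
a point `a` of the group where `u` is smallest, `u n ≥ Δ |n - a| / 2` and `|n - a| ≤ 1 / Δ`.
Each distance `k ≤ 1 / Δ` occurs at most twice, so the group contributes at most
`D + (4 / Δ) ∑_{k ≤ 1/Δ} 1 / k ≤ D + (4 / Δ) (1 + log (2 + 1 / Δ))`.
-/

/-- `‖θ‖`, the distance from `θ` to the nearest integer. -/
noncomputable def distNearestInt (θ : ℝ) : ℝ := |θ - round θ|

open Finset Real

/-- `min D (1 / x)` read with `1 / 0 = ∞`, as in the paper; Lean's `1 / 0 = 0` would make it `0`. -/
noncomputable def truncInv (D x : ℝ) : ℝ := if x = 0 then D else min D (1 / x)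

lemma truncInv_le_left (D x : ℝ) : truncInv D x ≤ D := by
  unfold truncInv
  split_ifs
  exacts [le_rfl, min_le_left _ _]

lemma truncInv_le_one_div (D : ℝ) {x : ℝ} (hx : 0 < x) : truncInv D x ≤ 1 / x := by
  rw [truncInv, if_neg hx.ne']
  exact min_le_right _ _

lemma Nat.cast_dist_eq_abs_sub (n a : ℕ) : (n.dist a : ℝ) = |(n : ℝ) - a| := by
  rcases le_total n a with h | h
  · rw [Nat.dist_eq_sub_of_le h, Nat.cast_sub h, abs_sub_comm,
      abs_of_nonneg (sub_nonneg.2 (Nat.cast_le.2 h))]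
  · rw [Nat.dist_eq_sub_of_le_right h, Nat.cast_sub h,
      abs_of_nonneg (sub_nonneg.2 (Nat.cast_le.2 h))]

lemma sum_inv_le_one_add_log {s : Finset ℕ} {d : ℕ → ℕ} {K : ℕ} (hd : Set.InjOn d s)
    (hdK : ∀ n ∈ s, d n ∈ Icc 1 K) : ∑ n ∈ s, (d n : ℝ)⁻¹ ≤ 1 + log K :=
  calc ∑ n ∈ s, (d n : ℝ)⁻¹ = ∑ k ∈ s.image d, (k : ℝ)⁻¹ :=
        (sum_image (f := fun k : ℕ => (k : ℝ)⁻¹) hd).symm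
    _ ≤ ∑ k ∈ Icc 1 K, (k : ℝ)⁻¹ :=
        sum_le_sum_of_subset_of_nonneg (image_subset_iff.2 hdK) fun _ _ _ => by positivity
    _ = harmonic K := by simp [harmonic_eq_sum_Icc]
    _ ≤ 1 + log K := harmonic_le_one_add_log K

lemma sum_inv_dist_le {s : Finset ℕ} {a K : ℕ} (ha : a ∉ s) (hK : ∀ n ∈ s, n.dist a ≤ K) :
    ∑ n ∈ s, (n.dist a : ℝ)⁻¹ ≤ 2 * (1 + log K) := by
  rw [← sum_filter_add_sum_filter_not s (a < ·), two_mul]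
  have hne : ∀ n ∈ s, n ≠ a := fun n hn h => ha (h ▸ hn)
  gcongr <;>
  refine sum_inv_le_one_add_log (fun p hp q hq h => ?_) fun n hn =>
    mem_Icc.2 ⟨Nat.dist_pos_of_ne (hne n (mem_filter.1 hn).1), hK n (mem_filter.1 hn).1⟩ <;>
  simp only [mem_coe, mem_filter, Nat.dist] at hp hq h <;>
  omega

lemma sum_truncInv_le_of_separated {Δ D : ℝ} (hΔ : 0 < Δ) (hD : 0 ≤ D) {S : Finset ℕ}
    {u : ℕ → ℝ} (hu : ∀ n ∈ S, u n ≤ 1 / 2)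
    (hsep : ∀ p ∈ S, ∀ q ∈ S, Δ * |(p : ℝ) - q| ≤ u p + u q) :
    ∑ n ∈ S, truncInv D (u n) ≤ D + 4 / Δ * (1 + log (2 + 1 / Δ)) := by
  have hL : 0 ≤ log (2 + 1 / Δ) := log_nonneg (by linarith [one_div_pos.2 hΔ])
  rcases S.eq_empty_or_nonempty with rfl | hS
  · rw [sum_empty]
    positivity
  obtain ⟨a, haS, hmin⟩ := S.exists_min_image u hS
  have hclose : ∀ n ∈ S, Δ * n.dist a ≤ 2 * u n := fun n hn => by
    rw [Nat.cast_dist_eq_abs_sub]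
    linarith [hsep n hn a haS, hmin n hn]
  set K := ⌊1 / Δ⌋₊
  have hK : ∀ n ∈ S, n.dist a ≤ K := fun n hn => Nat.le_floor <| by
    rw [le_div_iff₀ hΔ]
    linarith [hclose n hn, hu n hn]
  have hlogK : log K ≤ log (2 + 1 / Δ) := by
    rcases K.eq_zero_or_pos with h | h
    · rwa [h, Nat.cast_zero, log_zero]
    · exact log_le_log (by exact_mod_cast h) (by linarith [Nat.floor_le (one_div_pos.2 hΔ).le])
  have hfar : ∀ n ∈ S.erase a, truncInv D (u n) ≤ 2 / Δ * (n.dist a : ℝ)⁻¹ := by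
    intro n hn
    obtain ⟨hna, hnS⟩ := mem_erase.1 hn
    have hd : (0 : ℝ) < n.dist a := by exact_mod_cast Nat.dist_pos_of_ne hna
    have hun : 0 < u n := by nlinarith [hclose n hnS]
    calc truncInv D (u n) ≤ 1 / u n := truncInv_le_one_div D hun
      _ ≤ 1 / (Δ * n.dist a / 2) :=
          one_div_le_one_div_of_le (by positivity) (by linarith [hclose n hnS])
      _ = 2 / Δ * (n.dist a : ℝ)⁻¹ := by field_simp
  calc ∑ n ∈ S, truncInv D (u n) = truncInv D (u a) + ∑ n ∈ S.erase a, truncInv D (u n) :=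
        (add_sum_erase _ _ haS).symm
    _ ≤ D + 2 / Δ * ∑ n ∈ S.erase a, (n.dist a : ℝ)⁻¹ := by
        rw [mul_sum]
        exact add_le_add (truncInv_le_left _ _) (sum_le_sum hfar)
    _ ≤ D + 2 / Δ * (2 * (1 + log K)) := by
        gcongr
        exact sum_inv_dist_le (notMem_erase a S) fun n hn => hK n (mem_of_mem_erase hn)
    _ ≤ D + 4 / Δ * (1 + log (2 + 1 / Δ)) := by
        rw [← mul_assoc, div_mul_eq_mul_div, show (2 : ℝ) * 2 = 4 by norm_num]
        gcongr

lemma sum_truncInv_distNearestInt_le {Δ D : ℝ} (hΔ : 0 < Δ) (hD : 0 ≤ D) {S : Finset ℕ}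
    {g : ℕ → ℝ} {m : ℤ} (hm : ∀ n ∈ S, round (g n) = m)
    (hsep : ∀ p ∈ S, ∀ q ∈ S, Δ * |(p : ℝ) - q| ≤ |g p - g q|) :
    ∑ n ∈ S, truncInv D (distNearestInt (g n)) ≤ D + 4 / Δ * (1 + log (2 + 1 / Δ)) := by
  have hdist : ∀ n ∈ S, distNearestInt (g n) = |g n - m| := fun n hn => by
    rw [distNearestInt, hm n hn]
  rw [sum_congr rfl fun n hn => by rw [hdist n hn]]
  refine sum_truncInv_le_of_separated hΔ hD (fun n hn => hdist n hn ▸ abs_sub_round _)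
    fun p hp q hq => (hsep p hp q hq).trans ?_
  calc |g p - g q| = |(g p - m) - (g q - m)| := by ring_nf
    _ ≤ |g p - m| + |g q - m| := abs_sub _ _

lemma card_image_round_le {ι : Type*} {s : Finset ι} {g : ι → ℝ} {B : ℝ} (hB : 0 ≤ B)
    (hg : ∀ i ∈ s, |g i| ≤ B) : ((s.image fun i => round (g i)).card : ℝ) ≤ 2 * (B + 1) := by
  set R := ⌊B + 1 / 2⌋
  have hR : 0 ≤ R := Int.floor_nonneg.2 (by linarith)
  have hsub : s.image (fun i => round (g i)) ⊆ Icc (-R) R := by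
    intro m hm
    obtain ⟨i, hi, rfl⟩ := mem_image.1 hm
    have hround : |(round (g i) : ℝ)| ≤ B + 1 / 2 := by
      have := abs_sub_abs_le_abs_sub (round (g i) : ℝ) (g i)
      rw [abs_sub_comm] at this
      linarith [abs_sub_round (g i), hg i hi]
    rw [abs_le] at hround
    rw [mem_Icc, neg_le, Int.le_floor, Int.le_floor]
    push_cast
    constructor <;> linarith
  calc ((s.image fun i => round (g i)).card : ℝ) ≤ (Icc (-R) R).card := by
        exact_mod_cast card_le_card hsub
    _ = 2 * R + 1 := by
        rw [Int.card_Icc, show R + 1 - -R = 2 * R + 1 by ring, ← Int.cast_natCast,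
          Int.toNat_of_nonneg (by omega)]
        push_cast
        ring
    _ ≤ 2 * (B + 1) := by linarith [Int.floor_le (B + 1 / 2)]

lemma sum_le_card_image_nsmul {ι κ M : Type*} [DecidableEq κ] [AddCommMonoid M] [PartialOrder M]
    [IsOrderedAddMonoid M] {s : Finset ι} (g : ι → κ) {T : ι → M} {c : M}
    (h : ∀ k ∈ s.image g, ∑ i ∈ s with g i = k, T i ≤ c) :
    ∑ i ∈ s, T i ≤ (s.image g).card • c := by
  rw [← sum_fiberwise_of_maps_to fun i hi => mem_image_of_mem g hi]
  exact sum_le_card_nsmul _ _ _ h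

lemma mul_abs_sub_le_abs_sub_of_le_deriv {s : Set ℝ} (hs : Convex ℝ s) {f f' : ℝ → ℝ} {Δ : ℝ}
    (hf : ∀ x ∈ s, HasDerivAt f (f' x) x) (hΔ : ∀ x ∈ s, Δ ≤ f' x) {x y : ℝ} (hx : x ∈ s)
    (hy : y ∈ s) : Δ * |x - y| ≤ |f x - f y| := by
  have hmono := hs.mul_sub_le_image_sub_of_le_deriv
    (fun z hz => (hf z hz).continuousAt.continuousWithinAt)
    (fun z hz => (hf z (interior_subset hz)).differentiableAt.differentiableWithinAt)
    fun z hz => (hf z (interior_subset hz)).deriv ▸ hΔ z (interior_subset hz)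
  rcases le_total x y with h | h
  · rw [abs_sub_comm x, abs_sub_comm (f x), abs_of_nonneg (sub_nonneg.2 h)]
    exact (hmono x hx y hy h).trans (le_abs_self _)
  · rw [abs_of_nonneg (sub_nonneg.2 h)]
    exact (hmono y hy x hx h).trans (le_abs_self _)

lemma Nat.cast_mem_Icc_of_mem_Ioc_floor {x y : ℝ} {n : ℕ} (hn : n ∈ Ioc ⌊x⌋₊ ⌊y⌋₊) :
    (n : ℝ) ∈ Set.Icc x y := by
  obtain ⟨hxn, hny⟩ := mem_Ioc.1 hn
  have hn0 : n ≠ 0 := by omega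
  exact ⟨((Nat.floor_lt' hn0).1 hxn).le, (Nat.le_floor_iff' hn0).1 hny⟩

theorem jia_min_sum_bound :
    ∃ C > (0 : ℝ), ∀ (N B Δ D : ℝ) (f f' : ℝ → ℝ),
      1 ≤ N → 0 ≤ B → 0 < Δ → 1 ≤ D →
      (∀ x ∈ Set.Icc N (2 * N), HasDerivAt f (f' x) x) →
      (∀ x ∈ Set.Icc N (2 * N), |f x| ≤ B) →
      (∀ x ∈ Set.Icc N (2 * N), Δ ≤ f' x) →
      (∑ n ∈ Finset.Ioc ⌊N⌋₊ ⌊2 * N⌋₊,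
          (if distNearestInt (f n) = 0 then D else min D (1 / distNearestInt (f n)))) ≤
        C * (B + 1) * (D + 1 / Δ) * Real.log (2 + 1 / Δ) := by
  refine ⟨24, by norm_num, fun N B Δ D f f' _ hB hΔ hD hderiv hbound hslope => ?_⟩
  set I := Ioc ⌊N⌋₊ ⌊2 * N⌋₊
  set L := log (2 + 1 / Δ)
  have hI : ∀ n ∈ I, (n : ℝ) ∈ Set.Icc N (2 * N) := fun _ => Nat.cast_mem_Icc_of_mem_Ioc_floor
  have hsep : ∀ p ∈ I, ∀ q ∈ I, Δ * |(p : ℝ) - q| ≤ |f p - f q| := fun p hp q hq =>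
    mul_abs_sub_le_abs_sub_of_le_deriv (convex_Icc _ _) hderiv hslope (hI p hp) (hI q hq)
  set r : ℕ → ℤ := fun n => round (f n)
  have hfiber : ∀ m ∈ I.image r,
      ∑ n ∈ I with r n = m, truncInv D (distNearestInt (f n)) ≤ D + 4 / Δ * (1 + L) :=
    fun m _ => sum_truncInv_distNearestInt_le hΔ (by linarith) (fun n hn => (mem_filter.1 hn).2)
      fun p hp q hq => hsep p (mem_filter.1 hp).1 q (mem_filter.1 hq).1
  have hcard : ((I.image r).card : ℝ) ≤ 2 * (B + 1) :=
    card_image_round_le (g := fun n : ℕ => f n) hB fun n hn => hbound n (hI n hn)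
  have hL : 1 ≤ 2 * L := by
    have h2 : (2 : ℝ) ≤ 2 + 1 / Δ := by linarith [one_div_pos.2 hΔ]
    linarith [log_two_gt_d9, log_le_log two_pos h2]
  have hgroup_le : D + 4 / Δ * (1 + L) ≤ 12 * (D + 1 / Δ) * L := by
    have hΔ' : 0 < 1 / Δ := one_div_pos.2 hΔ
    rw [show 4 / Δ = 4 * (1 / Δ) by ring]
    nlinarith [mul_le_mul_of_nonneg_left hL hΔ'.le]
  change ∑ n ∈ I, truncInv D (distNearestInt (f n)) ≤ _
  calc ∑ n ∈ I, truncInv D (distNearestInt (f n))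
      ≤ (I.image r).card * (D + 4 / Δ * (1 + L)) := by
        simpa only [nsmul_eq_mul] using sum_le_card_image_nsmul r hfiber
    _ ≤ 2 * (B + 1) * (12 * (D + 1 / Δ) * L) := by
        gcongr
        exact add_nonneg (by linarith) (mul_nonneg (by positivity) (by linarith))
    _ = 24 * (B + 1) * (D + 1 / Δ) * L := by ring
end
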